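/- arXiv:2603.03174 — 8 statements merged into one kernel-verified Lean document; each statement's English description precedes it below -/
import Mathlib

section
/- Let d be a positive integer. There exists a constant z ≥ 0 depending only on d with the following property: for every nonempty set X ⊆ ℝ^d there is a function f ∈ L(d) such that for all 0 ≤ v ≤ u, one has f(u, v+z) − z ≤ β_X(u,v) whenever v ≤ u − z, and β_X(u,v) ≤ f(u, v−z) + z whenever v ≥ z. -/
open Metric Set Filter
open scoped ENNReal NNReal

noncomputable section

/-- Least number of closed balls of radius `r` needed to cover `E`. -/
def coveringNumber {X : Type*} [MetricSpace X] (r : ℝ) (E : Set X) : ℕ∞ :=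
  sInf {n : ℕ∞ | ∃ s : Finset X, (s.card : ℕ∞) = n ∧ E ⊆ ⋃ x ∈ s, Metric.closedBall x r}

/-- Packing number: the largest cardinality of a subset of `E` whose closed `2r`-balls are
pairwise disjoint. -/
def packingNumber {X : Type*} [MetricSpace X] (r : ℝ) (E : Set X) : ℕ∞ :=
  sSup {n : ℕ∞ | ∃ s : Finset X, (s.card : ℕ∞) = n ∧ ↑s ⊆ E ∧
    (s : Set X).Pairwise fun x y =>
      Disjoint (Metric.closedBall x (2 * r)) (Metric.closedBall y (2 * r))}

/-- Base-2 logarithm `ℕ∞ → ℝ≥0∞`, clamped below at `0`. -/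
def elog2 (n : ℕ∞) : ℝ≥0∞ :=
  if n = ⊤ then ⊤ else ENNReal.ofReal (Real.logb 2 (n.toNat : ℝ))

/-- The infimal two-scale branching function `β_X(u,v) = log₂ inf_x P_{2^{-u}}(B(x,2^{-v}))`. -/
def brL (X : Type*) [MetricSpace X] (u v : ℝ) : ℝ≥0∞ :=
  elog2 (⨅ x : X, packingNumber ((2 : ℝ) ^ (-u)) (Metric.closedBall x ((2 : ℝ) ^ (-v))))

/-- The supremal two-scale branching function `ν_X(u,v) = log₂ sup_x N_{2^{-u}}(B(x,2^{-v}))`. -/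
def brU (X : Type*) [MetricSpace X] (u v : ℝ) : ℝ≥0∞ :=
  elog2 (⨆ x : X, coveringNumber ((2 : ℝ) ^ (-u)) (Metric.closedBall x ((2 : ℝ) ^ (-v))))

/-- The lower spectrum `dim_L^θ X`, valued in `[0,∞]`. -/
def lowerSpectrum (X : Type*) [MetricSpace X] (θ : ℝ) : ℝ≥0∞ :=
  ⨆ s ∈ {s : ℝ | 0 ≤ s ∧ ∃ C : ℝ, 0 < C ∧ ∀ r : ℝ, 0 < r → r < 1 → ∀ x : X,
      ENNReal.ofReal (C * (r ^ (θ - 1)) ^ s) ≤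
        (coveringNumber r (Metric.closedBall x (r ^ θ)) : ℝ≥0∞)},
    ENNReal.ofReal s

/-- The monotone (quasi-) lower spectrum. -/
def monoLowerSpectrum (X : Type*) [MetricSpace X] (θ : ℝ) : ℝ≥0∞ :=
  ⨆ s ∈ {s : ℝ | 0 ≤ s ∧ ∃ C : ℝ, 0 < C ∧ ∀ r R : ℝ, 0 < r → r ≤ r ^ θ → r ^ θ ≤ R → R < 1 →
      ∀ x : X, ENNReal.ofReal (C * (R / r) ^ s) ≤
        (coveringNumber r (Metric.closedBall x R) : ℝ≥0∞)},
    ENNReal.ofReal s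

/-- The class `L(α)`: functions on `Δ = {v ≤ u}` that are nonnegative, vanish on the diagonal,
are superadditive, and are `α`-Lipschitz in the first variable. -/
def MemL (α : ℝ) (f : ℝ → ℝ → ℝ) : Prop :=
  (∀ u v : ℝ, v ≤ u → 0 ≤ f u v) ∧
  (∀ u : ℝ, f u u = 0) ∧
  (∀ u w v : ℝ, v ≤ w → w ≤ u → f u w + f w v ≤ f u v) ∧
  (∀ v u₁ u₂ : ℝ, v ≤ u₁ → v ≤ u₂ → |f u₁ v - f u₂ v| ≤ α * |u₁ - u₂|)

/-- The class `H(α)`: functions `(0,1] → [0,α]` satisfying (S) and (W). -/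
def MemH (α : ℝ) (φ : ℝ → ℝ) : Prop :=
  (∀ θ : ℝ, 0 < θ → θ ≤ 1 → 0 ≤ φ θ ∧ φ θ ≤ α) ∧
  (∀ lam θ : ℝ, 0 < lam → lam ≤ 1 → 0 < θ → θ ≤ 1 → φ θ + θ * φ lam ≤ φ (lam * θ)) ∧
  (∀ lam θ : ℝ, 0 < lam → lam ≤ 1 → 0 < θ → θ ≤ 1 → φ (lam * θ) ≤ (1 - θ) * α + θ * φ lam)

/-- The class `M(α)`: functions `(0,1] → [0,α]` satisfying (W) and (M). -/
def MemM (α : ℝ) (φ : ℝ → ℝ) : Prop :=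
  (∀ θ : ℝ, 0 < θ → θ ≤ 1 → 0 ≤ φ θ ∧ φ θ ≤ α) ∧
  (∀ lam θ : ℝ, 0 < lam → lam ≤ 1 → 0 < θ → θ ≤ 1 → φ (lam * θ) ≤ (1 - θ) * α + θ * φ lam) ∧
  (∀ θ₁ θ₂ : ℝ, 0 < θ₁ → θ₁ ≤ θ₂ → θ₂ < 1 → φ θ₂ / (1 - θ₂) ≤ φ θ₁ / (1 - θ₁))

/-- The normalized limit `Λ(f)(θ) = liminf_{u→∞} f(u, θu)/u` for real-valued `f`. -/
def Lam (f : ℝ → ℝ → ℝ) (θ : ℝ) : ℝ :=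
  Filter.liminf (fun u => f u (θ * u) / u) Filter.atTop

/-- The normalized limit `Λ(g)(θ) = liminf_{u→∞} g(u, θu)/u` for `[0,∞]`-valued `g`. -/
def LamE (g : ℝ → ℝ → ENNReal) (θ : ℝ) : ℝ≥0∞ :=
  Filter.liminf (fun u => g u (θ * u) / ENNReal.ofReal u) Filter.atTop

/-- The two-piece affine function `φ_{α,λ,t}` through `(0,α)`, `(λ,t)` and `(1,0)`. -/
def phiFun (α lam t : ℝ) : ℝ → ℝ := fun θ =>
  if θ ≤ lam then α + (θ / lam) * (t - α) else t * (1 - θ) / (1 - lam)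

/-- The maximal element `h_{g,z}` of `L(α)` agreeing with `g` on the strip `{(u,z) : u ≥ z}`. -/
def hFun (α : ℝ) (g : ℝ → ℝ) (z : ℝ) : ℝ → ℝ → ℝ := fun u v =>
  if z ≤ v then g u - g v else α * (u - v)

/-- A metric space is `η`-uniform if `η(u)/u → 0` and `ν_X ≤ β_X + η(u)` on `Δ`. -/
def IsEtaUniform (η : ℝ → ℝ) (X : Type*) [MetricSpace X] : Prop :=
  Filter.Tendsto (fun u => η u / u) Filter.atTop (nhds 0) ∧
  ∀ u v : ℝ, v ≤ u → brU X u v ≤ brL X u v + ENNReal.ofReal (η u)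

/-- A metric space is uniform if it is `η`-uniform for some `η`. -/
def IsUniform (X : Type*) [MetricSpace X] : Prop := ∃ η : ℝ → ℝ, IsEtaUniform η X

/-- The relation `f ≍ g` between a real-valued and an `[0,∞]`-valued function on `Δ`. -/
def AsympRE (f : ℝ → ℝ → ℝ) (g : ℝ → ℝ → ENNReal) : Prop :=
  ∃ η : ℝ → ℝ, (∀ u : ℝ, 0 ≤ η u) ∧
    Filter.Tendsto (fun u => η u / u) Filter.atTop (nhds 0) ∧
    ∀ u v : ℝ, 0 ≤ v → v ≤ u →
      (v ≤ u - η u → ENNReal.ofReal (f u (v + η u) - η u) ≤ g u v) ∧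
      (η u ≤ v → g u v ≤ ENNReal.ofReal (f u (v - η u) + η u))


/-!
Up to unit shifts of the scales, the branching function `β` of a set in `ℝ^d` is monotone and
superadditive (packings of the balls of a coarse packing combine into one packing), and it is
`d`-Lipschitz in `u` up to an additive error `3d` (a maximal packing at a coarse scale is a net,
and a volume bound limits the fine-scale packing points near each of its points). Taking first
the superadditive hull of `β` over chains `v = t₀ ≤ ⋯ ≤ tₖ = u` and then its largest minorant
that grows at rate at most `d` in `u` gives an element of `L(d)` within bounded shifts of `β`.
-/

open scoped Pointwise

structure IsSuperadditiveOnΔ (f : ℝ → ℝ → ℝ) : Prop where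
  nonneg : ∀ {u v : ℝ}, v ≤ u → 0 ≤ f u v
  diag : ∀ u : ℝ, f u u = 0
  superadd : ∀ {u w v : ℝ}, v ≤ w → w ≤ u → f u w + f w v ≤ f u v

theorem IsSuperadditiveOnΔ.mono_left {f : ℝ → ℝ → ℝ} (hf : IsSuperadditiveOnΔ f) {v u₁ u₂ : ℝ}
    (hv : v ≤ u₁) (h : u₁ ≤ u₂) : f u₁ v ≤ f u₂ v := by
  linarith [hf.superadd hv h, hf.nonneg h]

section LipschitzEnvelope

/-- The largest minorant of `f` that grows at rate at most `α` in `u`. -/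
def lipschitzEnvelope (α : ℝ) (f : ℝ → ℝ → ℝ) (u v : ℝ) : ℝ :=
  ⨅ w : Icc v u, f w v + α * (u - w)

variable {α : ℝ} {f : ℝ → ℝ → ℝ}

theorem lipschitzEnvelope_le (hf : IsSuperadditiveOnΔ f) (hα : 0 ≤ α) {u v w : ℝ}
    (hw : w ∈ Icc v u) : lipschitzEnvelope α f u v ≤ f w v + α * (u - w) := by
  refine ciInf_le (f := fun w : Icc v u => f w v + α * (u - w)) ⟨0, ?_⟩ ⟨w, hw⟩
  rintro _ ⟨⟨w', hw'⟩, rfl⟩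
  exact add_nonneg (hf.nonneg hw'.1) (mul_nonneg hα (sub_nonneg.2 hw'.2))

theorem le_lipschitzEnvelope {u v b : ℝ} (hvu : v ≤ u)
    (h : ∀ w ∈ Icc v u, b ≤ f w v + α * (u - w)) : b ≤ lipschitzEnvelope α f u v := by
  have : Nonempty (Icc v u) := ⟨⟨v, left_mem_Icc.2 hvu⟩⟩
  exact le_ciInf fun w => h w w.2

theorem lipschitzEnvelope_le_self (hf : IsSuperadditiveOnΔ f) (hα : 0 ≤ α) {u v : ℝ}
    (hvu : v ≤ u) : lipschitzEnvelope α f u v ≤ f u v := by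
  simpa using lipschitzEnvelope_le hf hα (right_mem_Icc.2 hvu)

theorem lipschitzEnvelope_le_add (hf : IsSuperadditiveOnΔ f) (hα : 0 ≤ α) {v u₁ u₂ : ℝ}
    (hv : v ≤ u₁) (h : u₁ ≤ u₂) :
    lipschitzEnvelope α f u₂ v ≤ lipschitzEnvelope α f u₁ v + α * (u₂ - u₁) := by
  suffices lipschitzEnvelope α f u₂ v - α * (u₂ - u₁) ≤ lipschitzEnvelope α f u₁ v by linarith
  refine le_lipschitzEnvelope hv fun w hw => ?_
  linarith [lipschitzEnvelope_le hf hα ⟨hw.1, hw.2.trans h⟩]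

theorem isSuperadditiveOnΔ_lipschitzEnvelope (hf : IsSuperadditiveOnΔ f) (hα : 0 ≤ α) :
    IsSuperadditiveOnΔ (lipschitzEnvelope α f) := by
  have nonneg {u v : ℝ} (hvu : v ≤ u) : 0 ≤ lipschitzEnvelope α f u v :=
    le_lipschitzEnvelope hvu fun w hw =>
      add_nonneg (hf.nonneg hw.1) (mul_nonneg hα (sub_nonneg.2 hw.2))
  refine ⟨nonneg, fun u => ?_, fun {u w v} hvw hwu => ?_⟩
  · exact le_antisymm ((lipschitzEnvelope_le_self hf hα le_rfl).trans_eq (hf.diag u))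
      (nonneg le_rfl)
  · refine le_lipschitzEnvelope (hvw.trans hwu) fun w' hw' => ?_
    rcases le_total w w' with hww' | hw'w
    · linarith [lipschitzEnvelope_le hf hα ⟨hww', hw'.2⟩ (u := u) (v := w),
        lipschitzEnvelope_le_self hf hα hvw, hf.superadd hvw hww']
    · have hdiag := lipschitzEnvelope_le hf hα (left_mem_Icc.2 hwu) (α := α)
      rw [hf.diag] at hdiag
      linarith [lipschitzEnvelope_le hf hα ⟨hw'.1, hw'w⟩ (u := w) (v := v)]

theorem memL_lipschitzEnvelope (hf : IsSuperadditiveOnΔ f) (hα : 0 ≤ α) :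
    MemL α (lipschitzEnvelope α f) := by
  have hF := isSuperadditiveOnΔ_lipschitzEnvelope hf hα
  have lip {v u₁ u₂ : ℝ} (hv : v ≤ u₁) (h : u₁ ≤ u₂) :
      |lipschitzEnvelope α f u₁ v - lipschitzEnvelope α f u₂ v| ≤ α * |u₁ - u₂| := by
    rw [abs_sub_comm, abs_of_nonneg (sub_nonneg.2 (hF.mono_left hv h)), abs_sub_comm,
      abs_of_nonneg (sub_nonneg.2 h)]
    linarith [lipschitzEnvelope_le_add hf hα hv h]
  refine ⟨fun u v => hF.nonneg, hF.diag, fun u w v => hF.superadd, fun v u₁ u₂ h₁ h₂ => ?_⟩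
  rcases le_total u₁ u₂ with h | h
  · exact lip h₁ h
  · rw [abs_sub_comm, abs_sub_comm u₁]
    exact lip h₂ h

end LipschitzEnvelope

section SuperadditiveHull

/-- `IsChainSum c u v x`: `x = ∑ᵢ c tᵢ₊₁ tᵢ` for some chain `v = t₀ ≤ t₁ ≤ ⋯ ≤ tₖ = u`. -/
inductive IsChainSum (c : ℝ → ℝ → ℝ) : ℝ → ℝ → ℝ → Prop
  | nil (u : ℝ) : IsChainSum c u u 0
  | cons {u w v x : ℝ} : v ≤ w → IsChainSum c u w x → IsChainSum c u v (c w v + x)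

variable {c : ℝ → ℝ → ℝ}

theorem IsChainSum.le {u v x : ℝ} (h : IsChainSum c u v x) : v ≤ u := by
  induction h with
  | nil => exact le_rfl
  | cons hvw _ ih => exact hvw.trans ih

theorem IsChainSum.single {u v : ℝ} (h : v ≤ u) : IsChainSum c u v (c u v) := by
  simpa using IsChainSum.cons h (.nil u)

theorem IsChainSum.append {u w v x y : ℝ} (hx : IsChainSum c w v x) (hy : IsChainSum c u w y) :
    IsChainSum c u v (x + y) := by
  induction hx with
  | nil => simpa using hy
  | cons hvw _ ih => simpa only [add_assoc] using IsChainSum.cons hvw ih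

def superadditiveHull (c : ℝ → ℝ → ℝ) (u v : ℝ) : ℝ :=
  sSup {x | IsChainSum c u v x}

end SuperadditiveHull

/-- The properties of `β_X` that the construction needs; superadditivity holds only up to unit
shifts of the scales. -/
structure IsCoarseBranching (g : ℝ → ℝ → ℝ) : Prop where
  nonneg : ∀ u v, 0 ≤ g u v
  eq_zero_of_le : ∀ {u v}, u ≤ v → g u v = 0
  mono_left : ∀ {u₁ u₂} (v), u₁ ≤ u₂ → g u₁ v ≤ g u₂ v
  anti_right : ∀ (u) {v₁ v₂}, v₁ ≤ v₂ → g u v₂ ≤ g u v₁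
  superadd : ∀ {u w v}, v ≤ w → w + 2 ≤ u → g w (v + 1) + g u (w + 1) ≤ g u v

namespace IsCoarseBranching

variable {g : ℝ → ℝ → ℝ}

/-- Lets the bound `x ≤ g u (v + 2)` propagate along chains whose links `t → s` cost
`g s (t + 3)`. -/
theorem chain_step (hg : IsCoarseBranching g) {a m u : ℝ} (ham : a ≤ m) (hmu : m ≤ u) :
    g m (a + 3) + g u (m + 2) ≤ g u (a + 2) := by
  by_cases hum : u ≤ m + 2
  · rw [hg.eq_zero_of_le hum, add_zero]
    exact (hg.mono_left _ hmu).trans (hg.anti_right u (by linarith))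
  by_cases hma : m ≤ a + 2
  · rw [hg.eq_zero_of_le (by linarith : m ≤ a + 3), zero_add]
    exact hg.anti_right u (by linarith)
  have := hg.superadd (v := a + 2) (w := m) (u := u) (by linarith) (by linarith)
  rw [add_assoc, (by norm_num : (2 : ℝ) + 1 = 3)] at this
  linarith [hg.anti_right u (by linarith : m + 1 ≤ m + 2)]

theorem le_of_isChainSum (hg : IsCoarseBranching g) {u v x : ℝ}
    (h : IsChainSum (fun u v => g u (v + 3)) u v x) : x ≤ g u (v + 2) := by
  induction h with
  | nil => exact hg.nonneg _ _
  | cons hvw hchain ih => linarith [hg.chain_step hvw hchain.le]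

theorem superadditiveHull_le (hg : IsCoarseBranching g) {u v : ℝ} (h : v ≤ u) :
    superadditiveHull (fun u v => g u (v + 3)) u v ≤ g u (v + 2) :=
  csSup_le ⟨_, .single h⟩ fun _ => hg.le_of_isChainSum

theorem le_superadditiveHull (hg : IsCoarseBranching g) {u v : ℝ} (h : v ≤ u) :
    g u (v + 3) ≤ superadditiveHull (fun u v => g u (v + 3)) u v :=
  le_csSup ⟨_, fun _ => hg.le_of_isChainSum⟩ (.single h)

theorem isSuperadditiveOnΔ_superadditiveHull (hg : IsCoarseBranching g) :
    IsSuperadditiveOnΔ (superadditiveHull fun u v => g u (v + 3)) := by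
  have bdd (u v : ℝ) : BddAbove {x | IsChainSum (fun u v => g u (v + 3)) u v x} :=
    ⟨_, fun _ => hg.le_of_isChainSum⟩
  refine ⟨fun h => (hg.nonneg _ _).trans (hg.le_superadditiveHull h), fun u => ?_,
    fun {u w v} hvw hwu => ?_⟩
  · refine le_antisymm ((hg.superadditiveHull_le le_rfl).trans_eq ?_)
      ((hg.nonneg _ _).trans (hg.le_superadditiveHull le_rfl))
    exact hg.eq_zero_of_le (by linarith)
  · rw [add_comm, superadditiveHull, superadditiveHull,
      ← csSup_add ⟨_, .single hvw⟩ (bdd w v) ⟨_, .single hwu⟩ (bdd u w)]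
    refine csSup_le_csSup (bdd u v) (Set.add_nonempty.2 ⟨⟨_, .single hvw⟩, ⟨_, .single hwu⟩⟩) ?_
    rintro _ ⟨x, hx, y, hy, rfl⟩
    exact hx.append hy

theorem exists_memL (hg : IsCoarseBranching g) {α C : ℝ} (hα : 0 ≤ α)
    (hlip : ∀ t {u₁ u₂}, u₁ ≤ u₂ → g u₂ t ≤ g u₁ t + α * (u₂ - u₁) + C) :
    ∃ f, MemL α f ∧ ∀ u v, v ≤ u → f u v ≤ g u (v + 2) ∧ g u (v + 3) - C ≤ f u v := by
  have hF := hg.isSuperadditiveOnΔ_superadditiveHull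
  refine ⟨lipschitzEnvelope α _, memL_lipschitzEnvelope hF hα, fun u v hvu => ⟨?_, ?_⟩⟩
  · exact (lipschitzEnvelope_le_self hF hα hvu).trans (hg.superadditiveHull_le hvu)
  · refine le_lipschitzEnvelope hvu fun w hw => ?_
    linarith [hlip (v + 3) hw.2, hg.le_superadditiveHull hw.1]

end IsCoarseBranching

section Packing

variable {Y : Type*} [MetricSpace Y]

def IsPacking (r : ℝ) (E : Set Y) (s : Finset Y) : Prop :=
  ↑s ⊆ E ∧ (s : Set Y).Pairwise fun x y => Disjoint (closedBall x (2 * r)) (closedBall y (2 * r))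

variable {r : ℝ} {E : Set Y} {s : Finset Y}

theorem IsPacking.card_le_packingNumber (h : IsPacking r E s) :
    (s.card : ℕ∞) ≤ packingNumber r E :=
  le_sSup ⟨s, rfl, h⟩

theorem packingNumber_le_of_forall_card_le {N : ℕ} (h : ∀ s, IsPacking r E s → s.card ≤ N) :
    packingNumber r E ≤ N :=
  sSup_le <| by rintro _ ⟨s, rfl, hs⟩; exact_mod_cast h s hs

theorem exists_isPacking_le_card {n : ℕ} (h : (n : ℕ∞) ≤ packingNumber r E) :
    ∃ s, IsPacking r E s ∧ n ≤ s.card := by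
  cases n with
  | zero => exact ⟨∅, by simp [IsPacking], le_rfl⟩
  | succ k =>
    obtain ⟨_, ⟨s, rfl, hs⟩, hk⟩ := lt_sSup_iff.1 ((Nat.cast_lt.2 k.lt_succ_self).trans_le h)
    exact ⟨s, hs, Nat.cast_lt.1 hk⟩

theorem packingNumber_mono {E' : Set Y} (h : E ⊆ E') : packingNumber r E ≤ packingNumber r E' :=
  sSup_le <| by rintro _ ⟨s, rfl, hs⟩; exact IsPacking.card_le_packingNumber ⟨hs.1.trans h, hs.2⟩

theorem packingNumber_anti {r' : ℝ} (h : r' ≤ r) : packingNumber r E ≤ packingNumber r' E :=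
  sSup_le <| by
    rintro _ ⟨s, rfl, hsE, hs⟩
    refine IsPacking.card_le_packingNumber ⟨hsE, hs.mono' fun x y hxy => hxy.mono ?_ ?_⟩ <;>
      exact closedBall_subset_closedBall (by linarith)

theorem IsPacking.dist_gt (h : IsPacking r E s) (hr : 0 ≤ r) :
    (s : Set Y).Pairwise fun p q => 2 * r < dist p q :=
  h.2.mono' fun p q hpq => by
    by_contra! hle
    exact disjoint_left.1 hpq (mem_closedBall_self (by linarith)) (mem_closedBall.2 hle)

theorem IsPacking.insert [DecidableEq Y] {p : Y} (h : IsPacking r E s) (hp : p ∈ E)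
    (hfar : ∀ q ∈ s, 4 * r < dist p q) : IsPacking r E (insert p s) := by
  refine ⟨by simpa [Set.insert_subset_iff] using ⟨hp, h.1⟩, ?_⟩
  rw [Finset.coe_insert, Set.pairwise_insert]
  refine ⟨h.2, fun q hq _ => ⟨?_, ?_⟩⟩ <;> apply closedBall_disjoint_closedBall
  · linarith [hfar q hq]
  · linarith [hfar q hq, dist_comm p q]

theorem IsPacking.exists_dist_le (h : IsPacking r E s) (hmax : packingNumber r E = s.card)
    (hr : 0 ≤ r) {p : Y} (hp : p ∈ E) : ∃ q ∈ s, dist p q ≤ 4 * r := by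
  classical
  by_contra! hfar
  have hps : p ∉ s := fun hps => by linarith [hfar p hps, dist_self p]
  have := (h.insert hp hfar).card_le_packingNumber
  rw [hmax, Finset.card_insert_of_notMem hps, Nat.cast_le] at this
  omega

theorem packingNumber_closedBall_le_one {R : ℝ} (hr : 0 ≤ r) (hR : R ≤ r) (x : Y) :
    packingNumber r (closedBall x R) ≤ 1 :=
  packingNumber_le_of_forall_card_le fun s hs => Finset.card_le_one.2 fun a ha b hb => by
    by_contra hab
    linarith [hs.dist_gt hr ha hb hab, dist_triangle_right a b x, mem_closedBall.1 (hs.1 ha),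
      mem_closedBall.1 (hs.1 hb)]

theorem IsPacking.pairwiseDisjoint {x : Y} {R₁ ρ s' : ℝ} {T : Finset Y} {S : Y → Finset Y}
    (hT : IsPacking r (closedBall x R₁) T) (hS : ∀ t ∈ T, IsPacking s' (closedBall t ρ) (S t))
    (hr : 0 ≤ r) (hρr : ρ ≤ r) : (T : Set Y).PairwiseDisjoint S := by
  intro t₁ ht₁ t₂ ht₂ hne
  refine Finset.disjoint_left.2 fun a ha₁ ha₂ => ?_
  linarith [hT.dist_gt hr ht₁ ht₂ hne, dist_triangle_left t₁ t₂ a,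
    mem_closedBall.1 ((hS t₁ ht₁).1 ha₁), mem_closedBall.1 ((hS t₂ ht₂).1 ha₂)]

theorem IsPacking.biUnion [DecidableEq Y] {x : Y} {R₁ R ρ s' : ℝ} {T : Finset Y}
    {S : Y → Finset Y} (hT : IsPacking r (closedBall x R₁) T)
    (hS : ∀ t ∈ T, IsPacking s' (closedBall t ρ) (S t)) (hr : 0 ≤ r) (hR : R₁ + ρ ≤ R)
    (hs' : 2 * s' + ρ ≤ r) : IsPacking s' (closedBall x R) (T.biUnion S) := by
  constructor
  · intro a ha
    obtain ⟨t, ht, hta⟩ := Finset.mem_biUnion.1 ha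
    rw [mem_closedBall]
    linarith [dist_triangle a t x, mem_closedBall.1 ((hS t ht).1 hta), mem_closedBall.1 (hT.1 ht)]
  · intro a ha b hb hab
    obtain ⟨t₁, ht₁, hta₁⟩ := Finset.mem_biUnion.1 ha
    obtain ⟨t₂, ht₂, hbt₂⟩ := Finset.mem_biUnion.1 hb
    rcases eq_or_ne t₁ t₂ with rfl | hne
    · exact (hS t₁ ht₁).2 hta₁ hbt₂ hab
    · apply closedBall_disjoint_closedBall
      linarith [hT.dist_gt hr ht₁ ht₂ hne, dist_triangle4 t₁ a b t₂, dist_comm t₁ a,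
        mem_closedBall.1 ((hS t₁ ht₁).1 hta₁), mem_closedBall.1 ((hS t₂ ht₂).1 hbt₂)]

end Packing

/-- The volume bound of a space of dimension `α`: the disjoint `ρ`-balls around `2ρ`-separated
points of a closed `R`-ball fit into a closed `(R + ρ)`-ball. -/
def SeparatedCardBound (α : ℝ) (Y : Type*) [MetricSpace Y] : Prop :=
  ∀ (s : Finset Y) (c : Y) {R ρ : ℝ}, 0 ≤ R → 0 < ρ → (∀ p ∈ s, dist p c ≤ R) →
    (s : Set Y).Pairwise (fun p q => 2 * ρ < dist p q) → (s.card : ℝ) ≤ ((R + ρ) / ρ) ^ α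

open MeasureTheory in
theorem separatedCardBound_finrank (E : Type*) [NormedAddCommGroup E] [NormedSpace ℝ E]
    [FiniteDimensional ℝ E] : SeparatedCardBound (Module.finrank ℝ E) E := by
  intro s c R ρ hR hρ hmem hsep
  borelize E
  set n := Module.finrank ℝ E
  let μ : Measure E := Measure.addHaar
  set B := μ (ball 0 1)
  have hB₀ : B ≠ 0 := (measure_ball_pos μ 0 one_pos).ne'
  have hBtop : B ≠ ⊤ := measure_ball_lt_top.ne
  have hdisj : (s : Set E).PairwiseDisjoint (closedBall · ρ) := fun p hp q hq hpq =>
    closedBall_disjoint_closedBall (by linarith [hsep hp hq hpq])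
  have hsub : ⋃ p ∈ s, closedBall p ρ ⊆ closedBall c (R + ρ) := by
    refine iUnion₂_subset fun p hp => closedBall_subset_closedBall' ?_
    linarith [hmem p hp]
  have hvol : (s.card : ℝ≥0∞) * ENNReal.ofReal (ρ ^ n) * B ≤ ENNReal.ofReal ((R + ρ) ^ n) * B :=
    calc (s.card : ℝ≥0∞) * ENNReal.ofReal (ρ ^ n) * B = ∑ p ∈ s, μ (closedBall p ρ) := by
          simp [Measure.addHaar_closedBall μ _ hρ.le, mul_assoc, n, B]
      _ = μ (⋃ p ∈ s, closedBall p ρ) :=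
          (measure_biUnion_finset hdisj fun _ _ => measurableSet_closedBall).symm
      _ ≤ μ (closedBall c (R + ρ)) := measure_mono hsub
      _ = ENNReal.ofReal ((R + ρ) ^ n) * B := Measure.addHaar_closedBall μ c (by positivity)
  rw [ENNReal.mul_le_mul_iff_left hB₀ hBtop, ← ENNReal.ofReal_natCast,
    ← ENNReal.ofReal_mul (by positivity), ENNReal.ofReal_le_ofReal_iff (by positivity)] at hvol
  rw [Real.rpow_natCast, div_pow, le_div_iff₀ (by positivity)]
  exact hvol

theorem SeparatedCardBound.subtype {α : ℝ} {Y : Type*} [MetricSpace Y]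
    (hY : SeparatedCardBound α Y) (X : Set Y) : SeparatedCardBound α X := by
  intro s c R ρ hR hρ hmem hsep
  have := hY (s.map (Function.Embedding.subtype _)) c hR hρ
    (by simpa [Subtype.dist_eq] using hmem) <| by
    rw [Finset.coe_map, Function.Embedding.coe_subtype, Subtype.val_injective.injOn.pairwise_image]
    exact hsep
  simpa using this

section SeparatedCardBound

variable {α : ℝ} {Y : Type*} [MetricSpace Y]

theorem SeparatedCardBound.card_le_mul (hY : SeparatedCardBound α Y) {S T : Finset Y} {R ρ : ℝ}
    (hR : 0 ≤ R) (hρ : 0 < ρ) (hS : (S : Set Y).Pairwise fun p q => 2 * ρ < dist p q)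
    (hcover : ∀ p ∈ S, ∃ q ∈ T, dist p q ≤ R) : (S.card : ℝ) ≤ T.card * ((R + ρ) / ρ) ^ α := by
  classical
  have hsub : S ⊆ T.biUnion fun q => S.filter (dist · q ≤ R) := fun p hp => by
    obtain ⟨q, hq, hpq⟩ := hcover p hp
    exact Finset.mem_biUnion.2 ⟨q, hq, Finset.mem_filter.2 ⟨hp, hpq⟩⟩
  calc (S.card : ℝ) ≤ ∑ q ∈ T, ((S.filter (dist · q ≤ R)).card : ℝ) := by
        exact_mod_cast (Finset.card_le_card hsub).trans Finset.card_biUnion_le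
    _ ≤ ∑ _q ∈ T, ((R + ρ) / ρ) ^ α := Finset.sum_le_sum fun q _ =>
        hY _ q hR hρ (fun p hp => (Finset.mem_filter.1 hp).2)
          (hS.mono (Finset.coe_subset.2 (Finset.filter_subset _ _)))
    _ = T.card * ((R + ρ) / ρ) ^ α := by rw [Finset.sum_const, nsmul_eq_mul]

theorem SeparatedCardBound.packingNumber_closedBall_ne_top (hY : SeparatedCardBound α Y)
    {r R : ℝ} (hr : 0 < r) (hR : 0 ≤ R) (x : Y) : packingNumber r (closedBall x R) ≠ ⊤ :=
  ne_top_of_le_ne_top (ENat.natCast_ne_top ⌈((R + r) / r) ^ α⌉₊) <|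
    packingNumber_le_of_forall_card_le fun s hs => by
      exact_mod_cast (hY s x hR hr (fun p hp => hs.1 hp) (hs.dist_gt hr.le)).trans (Nat.le_ceil _)

end SeparatedCardBound

theorem two_rpow_neg_add (v a : ℝ) : (2 : ℝ) ^ (-(v + a)) = 2 ^ (-v) / 2 ^ a := by
  rw [neg_add, Real.rpow_add two_pos, Real.rpow_neg two_pos.le a, div_eq_mul_inv]

theorem two_rpow_neg_le {a b : ℝ} (h : a ≤ b) : (2 : ℝ) ^ (-b) ≤ 2 ^ (-a) :=
  Real.rpow_le_rpow_of_exponent_le one_le_two (neg_le_neg h)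

/-- The infimum inside `brL`, so that `brL Y u v = elog2 (infPacking Y u v)`. -/
def infPacking (Y : Type*) [MetricSpace Y] (u v : ℝ) : ℕ∞ :=
  ⨅ x : Y, packingNumber ((2 : ℝ) ^ (-u)) (closedBall x ((2 : ℝ) ^ (-v)))

section InfPacking

variable {Y : Type*} [MetricSpace Y]

theorem infPacking_mono_left {u₁ u₂ : ℝ} (v : ℝ) (h : u₁ ≤ u₂) :
    infPacking Y u₁ v ≤ infPacking Y u₂ v :=
  iInf_mono fun _ => packingNumber_anti (two_rpow_neg_le h)

theorem infPacking_anti_right (u : ℝ) {v₁ v₂ : ℝ} (h : v₁ ≤ v₂) :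
    infPacking Y u v₂ ≤ infPacking Y u v₁ :=
  iInf_mono fun _ => packingNumber_mono (closedBall_subset_closedBall (two_rpow_neg_le h))

theorem one_le_infPacking (u v : ℝ) : 1 ≤ infPacking Y u v :=
  le_iInf fun x => by
    simpa using IsPacking.card_le_packingNumber (s := {x}) (r := (2 : ℝ) ^ (-u))
      ⟨by simp [(Real.rpow_pos_of_pos two_pos _).le], by simp⟩

theorem infPacking_le_one [Nonempty Y] {u v : ℝ} (h : u ≤ v) : infPacking Y u v ≤ 1 :=
  (iInf_le _ (Classical.arbitrary Y)).trans <|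
    packingNumber_closedBall_le_one (Real.rpow_pos_of_pos two_pos _).le (two_rpow_neg_le h) _

theorem mul_le_infPacking {u v w : ℝ} (hvw : v ≤ w) (hwu : w + 2 ≤ u) {n₁ n₂ : ℕ}
    (h₁ : (n₁ : ℕ∞) ≤ infPacking Y w (v + 1)) (h₂ : (n₂ : ℕ∞) ≤ infPacking Y u (w + 1)) :
    ((n₁ * n₂ : ℕ) : ℕ∞) ≤ infPacking Y u v := by
  classical
  refine le_iInf fun x => ?_
  obtain ⟨T, hT, hn₁⟩ := exists_isPacking_le_card (h₁.trans (iInf_le _ x))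
  choose S hS hn₂ using fun t : Y => exists_isPacking_le_card (h₂.trans (iInf_le _ t))
  have hr : (0 : ℝ) ≤ 2 ^ (-w) := (Real.rpow_pos_of_pos two_pos _).le
  have hρ : (2 : ℝ) ^ (-(w + 1)) = 2 ^ (-w) / 2 := by rw [two_rpow_neg_add, Real.rpow_one]
  have hR : (2 : ℝ) ^ (-(v + 1)) + 2 ^ (-(w + 1)) ≤ 2 ^ (-v) := by
    rw [hρ, two_rpow_neg_add, Real.rpow_one]
    linarith [two_rpow_neg_le hvw]
  have hs : 2 * (2 : ℝ) ^ (-u) + 2 ^ (-(w + 1)) ≤ 2 ^ (-w) := by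
    have := two_rpow_neg_le hwu
    rw [two_rpow_neg_add, Real.rpow_two] at this
    linarith
  have hU := hT.biUnion (fun t _ => hS t) hr hR hs
  have hdisj := hT.pairwiseDisjoint (fun t _ => hS t) hr (by rw [hρ]; linarith)
  calc ((n₁ * n₂ : ℕ) : ℕ∞) ≤ (T.biUnion S).card := by
        rw [Finset.card_biUnion hdisj, Nat.cast_le]
        calc n₁ * n₂ ≤ T.card • n₂ := Nat.mul_le_mul_right _ hn₁
          _ ≤ ∑ t ∈ T, (S t).card := Finset.card_nsmul_le_sum _ _ _ fun t _ => hn₂ t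
    _ ≤ _ := hU.card_le_packingNumber

theorem SeparatedCardBound.infPacking_ne_top {α : ℝ} (hY : SeparatedCardBound α Y) [Nonempty Y]
    (u v : ℝ) : infPacking Y u v ≠ ⊤ :=
  ne_top_of_le_ne_top (hY.packingNumber_closedBall_ne_top (Real.rpow_pos_of_pos two_pos _)
    (Real.rpow_pos_of_pos two_pos _).le (Classical.arbitrary Y)) (iInf_le _ _)

end InfPacking

section Branching

variable {α : ℝ} {Y : Type*} [MetricSpace Y] [Nonempty Y]

/-- Covering a maximal packing at the coarse scale `2^(-u₁)` by balls of radius `4 · 2^(-u₁)`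
controls every packing at the finer scale `2^(-u₂)`. -/
theorem SeparatedCardBound.toNat_infPacking_le (hY : SeparatedCardBound α Y) (hα : 0 ≤ α)
    (t : ℝ) {u₁ u₂ : ℝ} (h : u₁ ≤ u₂) :
    ((infPacking Y u₂ t).toNat : ℝ) ≤ (infPacking Y u₁ t).toNat * 2 ^ (α * (u₂ - u₁ + 3)) := by
  set r₁ : ℝ := 2 ^ (-u₁)
  set r₂ : ℝ := 2 ^ (-u₂)
  have hr₁ : 0 < r₁ := Real.rpow_pos_of_pos two_pos _
  have hr₂ : 0 < r₂ := Real.rpow_pos_of_pos two_pos _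
  obtain ⟨x, hx⟩ := ciInf_mem fun x : Y => packingNumber r₁ (closedBall x ((2 : ℝ) ^ (-t)))
  have hfin := hY.packingNumber_closedBall_ne_top hr₁ (Real.rpow_pos_of_pos two_pos (-t)).le x
  obtain ⟨T, hT, hTcard⟩ := exists_isPacking_le_card (ENat.natCast_toNat hfin).le
  have hTmax : packingNumber r₁ (closedBall x ((2 : ℝ) ^ (-t))) = T.card :=
    le_antisymm (by rwa [← ENat.natCast_toNat hfin, Nat.cast_le]) hT.card_le_packingNumber
  have hT₁ : (infPacking Y u₁ t).toNat = T.card := by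
    have hx : packingNumber r₁ (closedBall x ((2 : ℝ) ^ (-t))) = infPacking Y u₁ t := hx
    rw [← ENat.toNat_natCast T.card, ← hTmax, hx]
  obtain ⟨S, hS, hScard⟩ := exists_isPacking_le_card
    ((ENat.natCast_toNat (hY.infPacking_ne_top u₂ t)).le.trans (iInf_le _ x))
  have hcount := hY.card_le_mul (by positivity) hr₂ (hS.dist_gt hr₂.le)
    fun p hp => hT.exists_dist_le hTmax hr₁.le (hS.1 hp)
  have hratio : (4 * r₁ + r₂) / r₂ ≤ 2 ^ (u₂ - u₁ + 3) := by
    rw [div_le_iff₀ hr₂, show u₂ - u₁ + 3 = -u₁ + 3 - -u₂ by ring, Real.rpow_sub two_pos,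
      Real.rpow_add two_pos, div_mul_cancel₀ _ hr₂.ne']
    rw [show (2 : ℝ) ^ (3 : ℝ) = 8 by norm_num]
    linarith [two_rpow_neg_le h]
  calc ((infPacking Y u₂ t).toNat : ℝ) ≤ S.card := by exact_mod_cast hScard
    _ ≤ T.card * ((4 * r₁ + r₂) / r₂) ^ α := hcount
    _ ≤ T.card * (2 ^ (u₂ - u₁ + 3)) ^ α := by gcongr
    _ = (infPacking Y u₁ t).toNat * 2 ^ (α * (u₂ - u₁ + 3)) := by
      rw [hT₁, ← Real.rpow_mul two_pos.le, mul_comm α]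

def branching (Y : Type*) [MetricSpace Y] (u v : ℝ) : ℝ :=
  Real.logb 2 (infPacking Y u v).toNat

theorem SeparatedCardBound.brL_eq_ofReal_branching (hY : SeparatedCardBound α Y) (u v : ℝ) :
    brL Y u v = ENNReal.ofReal (branching Y u v) := by
  change elog2 (infPacking Y u v) = _
  rw [elog2, if_neg (hY.infPacking_ne_top u v), branching]

theorem SeparatedCardBound.toNat_infPacking_pos (hY : SeparatedCardBound α Y) (u v : ℝ) :
    (0 : ℝ) < (infPacking Y u v).toNat :=
  Nat.cast_pos.2 <| Nat.lt_of_lt_of_le one_pos <| by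
    simpa using ENat.toNat_le_toNat (one_le_infPacking u v) (hY.infPacking_ne_top u v)

theorem SeparatedCardBound.branching_le_branching (hY : SeparatedCardBound α Y) {u v u' v' : ℝ}
    (h : infPacking Y u v ≤ infPacking Y u' v') : branching Y u v ≤ branching Y u' v' :=
  Real.logb_le_logb_of_le one_lt_two (hY.toNat_infPacking_pos u v)
    (Nat.cast_le.2 (ENat.toNat_le_toNat h (hY.infPacking_ne_top u' v')))

theorem SeparatedCardBound.isCoarseBranching (hY : SeparatedCardBound α Y) :
    IsCoarseBranching (branching Y) where
  nonneg u v := Real.logb_nonneg one_lt_two (by exact_mod_cast hY.toNat_infPacking_pos u v)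
  eq_zero_of_le h := by
    rw [branching, le_antisymm (infPacking_le_one h) (one_le_infPacking _ _)]
    simp
  mono_left v h := hY.branching_le_branching (infPacking_mono_left v h)
  anti_right u _ _ h := hY.branching_le_branching (infPacking_anti_right u h)
  superadd {u w v} hvw hwu := by
    have hmul := mul_le_infPacking hvw hwu (ENat.natCast_toNat (hY.infPacking_ne_top _ _)).le
      (ENat.natCast_toNat (hY.infPacking_ne_top _ _)).le
    rw [← ENat.natCast_toNat (hY.infPacking_ne_top u v), Nat.cast_le] at hmul
    rw [branching, branching, ← Real.logb_mul (hY.toNat_infPacking_pos _ _).ne'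
      (hY.toNat_infPacking_pos _ _).ne']
    exact Real.logb_le_logb_of_le one_lt_two
      (mul_pos (hY.toNat_infPacking_pos _ _) (hY.toNat_infPacking_pos _ _)) (by exact_mod_cast hmul)

theorem SeparatedCardBound.branching_le_add (hY : SeparatedCardBound α Y) (hα : 0 ≤ α) (t : ℝ)
    {u₁ u₂ : ℝ} (h : u₁ ≤ u₂) :
    branching Y u₂ t ≤ branching Y u₁ t + α * (u₂ - u₁) + 3 * α := by
  calc branching Y u₂ t
      ≤ Real.logb 2 ((infPacking Y u₁ t).toNat * 2 ^ (α * (u₂ - u₁ + 3))) :=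
        Real.logb_le_logb_of_le one_lt_two (hY.toNat_infPacking_pos _ _)
          (hY.toNat_infPacking_le hα t h)
    _ = branching Y u₁ t + α * (u₂ - u₁) + 3 * α := by
      rw [Real.logb_mul (hY.toNat_infPacking_pos _ _).ne' (by positivity),
        Real.logb_rpow two_pos (by norm_num), branching]
      ring

end Branching

theorem branching_function_approx_general (d : ℕ) :
    ∃ z : ℝ, 0 ≤ z ∧ ∀ X : Set (EuclideanSpace ℝ (Fin d)), X.Nonempty →
      ∃ f : ℝ → ℝ → ℝ, MemL d f ∧
        ∀ u v : ℝ, 0 ≤ v → v ≤ u →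
          (v ≤ u - z → ENNReal.ofReal (f u (v + z) - z) ≤ brL X u v) ∧
          (z ≤ v → brL X u v ≤ ENNReal.ofReal (f u (v - z) + z)) := by
  refine ⟨3 * d + 3, by positivity, fun X hX => ?_⟩
  have : Nonempty X := hX.to_subtype
  have hY : SeparatedCardBound d X := by
    simpa using (separatedCardBound_finrank (EuclideanSpace ℝ (Fin d))).subtype X
  have hd : (0 : ℝ) ≤ d := Nat.cast_nonneg d
  have hg := hY.isCoarseBranching
  obtain ⟨f, hf, hfg⟩ := hg.exists_memL hd (hY.branching_le_add hd)
  refine ⟨f, hf, fun u v _ hvu => ⟨fun hvz => ?_, fun hzv => ?_⟩⟩ <;>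
    rw [hY.brL_eq_ofReal_branching] <;> refine ENNReal.ofReal_le_ofReal ?_
  · linarith [(hfg u (v + (3 * d + 3)) (by linarith)).1,
      hg.anti_right u (by linarith : v ≤ v + (3 * d + 3) + 2)]
  · linarith [(hfg u (v - (3 * d + 3)) (by linarith)).2,
      hg.anti_right u (by linarith : v - (3 * d + 3) + 3 ≤ v)]

/-- Every nonempty `X ⊆ ℝ^d` has branching function equivalent (with constant
depending only on `d`) to a member of `L(d)`. -/
theorem branching_function_approx (d : ℕ) (hd : 0 < d) :
    ∃ z : ℝ, 0 ≤ z ∧ ∀ X : Set (EuclideanSpace ℝ (Fin d)), X.Nonempty →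
      ∃ f : ℝ → ℝ → ℝ, MemL d f ∧
        ∀ u v : ℝ, 0 ≤ v → v ≤ u →
          (v ≤ u - z → ENNReal.ofReal (f u (v + z) - z) ≤ brL X u v) ∧
          (z ≤ v → brL X u v ≤ ENNReal.ofReal (f u (v - z) + z)) :=
  branching_function_approx_general d
end
end

section
/- Let d be a positive integer. There exists a constant z ≥ 0 depending only on d with the following property: for every f ∈ L(d) there is a nonempty compact set X ⊆ ℝ^d such that for all 0 ≤ v ≤ u, one has f(u, v+z) − z ≤ β_X(u,v) whenever v ≤ u − z, and β_X(u,v) ≤ f(u, v−z) + z whenever v ≥ z. -/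
open Metric Set Filter
open scoped ENNReal NNReal

noncomputable section

/-!
`X` is the origin together with a sequence of Cantor-type trees accumulating only at it. Tree `m`
starts at level `m + 3` inside a cube of side about `2⁻ᵐ`; at each level every cell splits into
`2ⁿ ≤ 2ᵈ` dyadic subcubes, with `n` chosen so that after `k` levels there are
`2 ^ ⌈f (m + 3 + k, m + 3)⌉` cells. The Lipschitz bound of `f` keeps `n ≤ d`.

Lower bound: every ball `B(x, 2⁻ᵛ)` contains a full subtree of some tree, cut at a level close to
`v`; by superadditivity and the Lipschitz bound its `2⁻ᵘ`-cells give about `2 ^ f(u, v)` separated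
points. Upper bound: a ball of radius `2⁻ᵛ` centred on the tree that starts near level `v` meets no
other tree, and separated points of that tree have distinct level-`u` cells, of which there are
about `2 ^ f(u, v)`.
-/

open Topology

section MemL

variable {α : ℝ} {f : ℝ → ℝ → ℝ}

theorem MemL.antitone_snd (hf : MemL α f) {u a b : ℝ} (hab : a ≤ b) (hbu : b ≤ u) :
    f u b ≤ f u a := by
  linarith [hf.2.2.1 u b a hab hbu, hf.1 b a hab]

theorem MemL.monotone_fst (hf : MemL α f) {v a b : ℝ} (hva : v ≤ a) (hab : a ≤ b) :
    f a v ≤ f b v := by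
  linarith [hf.2.2.1 b a v hva hab, hf.1 b a hab]

theorem MemL.apply_le_add (hf : MemL α f) {w A C u : ℝ} (hwA : w ≤ A) (hAu : A ≤ u)
    (hAC : A ≤ C) : f C A ≤ f u w + α * |C - u| := by
  linarith [(abs_le.mp (hf.2.2.2 A C u hAC hAu)).2, hf.antitone_snd hwA hAu]

theorem MemL.sub_le_apply_sub (hf : MemL α f) {A B w C u : ℝ} (hAB : A ≤ B) (hBw : B ≤ w)
    (hwC : w ≤ C) (hwu : w ≤ u) : f u w - α * |C - u| ≤ f C A - f B A := by
  linarith [hf.2.2.1 C B A hAB (hBw.trans hwC), hf.antitone_snd hBw hwC,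
    (abs_le.mp (hf.2.2.2 w C u hwC hwu)).1]

end MemL

namespace BranchingAttainable

theorem isCompact_insert_iUnion {X : Type*} [TopologicalSpace X] {K : ℕ → Set X} {x : X}
    (hK : ∀ n, IsCompact (K n)) (hx : Tendsto K atTop (𝓝 x).smallSets) :
    IsCompact (insert x (⋃ n, K n)) := by
  rw [isCompact_iff_ultrafilter_le_nhds]
  intro 𝒰 h𝒰
  by_cases hx𝒰 : ↑𝒰 ≤ 𝓝 x
  · exact ⟨x, mem_insert x _, hx𝒰⟩
  obtain ⟨U, hU, hU𝒰⟩ := Filter.not_le.mp hx𝒰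
  obtain ⟨N, hN⟩ := eventually_atTop.mp (hx.eventually (eventually_smallSets_subset.mpr hU))
  -- the ultrafilter avoids `U`, which swallows all but finitely many of the `K n`
  have hC : IsCompact (⋃ n ∈ Finset.range N, K n) :=
    (Finset.range N).isCompact_biUnion fun n _ => hK n
  have h𝒰C : ↑𝒰 ≤ 𝓟 (⋃ n ∈ Finset.range N, K n) := by
    refine le_principal_iff.mpr (mem_of_superset
      (inter_mem (le_principal_iff.mp h𝒰) (Ultrafilter.compl_mem_iff_notMem.mpr hU𝒰)) ?_)
    rintro y ⟨rfl | ⟨_, ⟨n, rfl⟩, hyn⟩, hyU⟩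
    · exact absurd (mem_of_mem_nhds hU) hyU
    · by_cases hnN : N ≤ n
      · exact absurd (hN n hnN hyn) hyU
      · exact mem_biUnion (Finset.mem_range.mpr (not_le.mp hnN)) hyn
  obtain ⟨y, hy, hy𝒰⟩ := hC.ultrafilter_le_nhds 𝒰 h𝒰C
  obtain ⟨n, -, hyn⟩ := mem_iUnion₂.mp hy
  exact ⟨y, mem_insert_of_mem x (mem_iUnion_of_mem n hyn), hy𝒰⟩

section Packing

variable {Y : Type*} [MetricSpace Y] {r : ℝ}

theorem card_le_packingNumber {E : Set Y} {s : Finset Y} (hsE : ↑s ⊆ E)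
    (hs : (s : Set Y).Pairwise fun y z => 4 * r < dist y z) :
    (s.card : ℕ∞) ≤ packingNumber r E :=
  le_sSup ⟨s, rfl, hsE, hs.mono' fun y z h => closedBall_disjoint_closedBall (by linarith)⟩

theorem packingNumber_le (hr : 0 ≤ r) {E : Set Y} {n : ℕ}
    (h : ∀ s : Finset Y, ↑s ⊆ E → (s : Set Y).Pairwise (fun y z => 2 * r < dist y z) →
      s.card ≤ n) :
    packingNumber r E ≤ n := by
  refine sSup_le ?_
  rintro _ ⟨s, rfl, hsE, hs⟩
  refine Nat.cast_le.mpr (h s hsE (hs.mono' fun y z hyz => ?_))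
  by_contra! hle
  exact disjoint_left.mp hyz (mem_closedBall_self (by linarith)) (mem_closedBall.mpr hle)

theorem card_le_packingNumber_closedBall {X : Set Y} (x : X) {ρ : ℝ} {t : Finset Y}
    (htX : ↑t ⊆ X) (htB : ↑t ⊆ closedBall (x : Y) ρ)
    (ht : (t : Set Y).Pairwise fun y z => 4 * r < dist y z) :
    (t.card : ℕ∞) ≤ packingNumber r (closedBall x ρ) := by
  classical
  have hcard : (t.subtype (· ∈ X)).card = t.card := by
    rw [Finset.card_subtype, Finset.filter_true_of_mem fun y hy => htX hy]
  rw [← hcard]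
  refine card_le_packingNumber (fun y hy => ?_) fun y hy z hz hyz => ?_
  · exact htB (Finset.mem_subtype.mp hy)
  · exact ht (Finset.mem_subtype.mp hy) (Finset.mem_subtype.mp hz) (Subtype.coe_ne_coe.mpr hyz)

theorem packingNumber_closedBall_le (hr : 0 ≤ r) {X : Set Y} (x : X) {ρ : ℝ} {n : ℕ}
    (h : ∀ s : Finset Y, ↑s ⊆ X ∩ closedBall (x : Y) ρ →
      (s : Set Y).Pairwise (fun y z => 2 * r < dist y z) → s.card ≤ n) :
    packingNumber r (closedBall x ρ) ≤ n := by
  refine packingNumber_le hr fun s hsB hs => ?_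
  rw [← Finset.card_map (Function.Embedding.subtype _)]
  refine h _ (fun y hy => ?_) fun y hy z hz hyz => ?_
  · obtain ⟨y, hys, rfl⟩ := Finset.mem_map.mp hy
    exact ⟨y.2, hsB hys⟩
  · obtain ⟨y, hys, rfl⟩ := Finset.mem_map.mp hy
    obtain ⟨z, hzs, rfl⟩ := Finset.mem_map.mp hz
    exact hs hys hzs fun h => hyz (congrArg Subtype.val h)

end Packing

theorem elog2_mono : Monotone elog2 := by
  intro a b hab
  rcases eq_or_ne b ⊤ with rfl | hb
  · simp [elog2]
  lift b to ℕ using hb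
  lift a to ℕ using ne_top_of_le_ne_top (ENat.natCast_ne_top b) hab
  simp only [elog2, ENat.natCast_ne_top, if_false, ENat.toNat_natCast]
  refine ENNReal.ofReal_le_ofReal ?_
  rcases Nat.eq_zero_or_pos a with rfl | ha
  · simp only [Nat.cast_zero, Real.logb_zero]
    exact div_nonneg (Real.log_natCast_nonneg b) (Real.log_nonneg one_le_two)
  · exact Real.logb_le_logb_of_le (by norm_num) (by exact_mod_cast ha) (by exact_mod_cast hab)

theorem elog2_natCast (K : ℕ) : elog2 K = ENNReal.ofReal (Real.logb 2 K) := by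
  simp [elog2]

theorem ofReal_le_elog2 {n : ℕ∞} {t : ℝ} (h : (⌈(2 : ℝ) ^ t⌉₊ : ℕ∞) ≤ n) :
    ENNReal.ofReal t ≤ elog2 n := by
  refine le_trans ?_ (elog2_mono h)
  rw [elog2_natCast]
  refine ENNReal.ofReal_le_ofReal ((Real.le_logb_iff_rpow_le one_lt_two ?_).mpr (Nat.le_ceil _))
  exact Nat.cast_pos.mpr (Nat.ceil_pos.mpr (by positivity))

theorem elog2_le_ofReal {n : ℕ∞} {t : ℝ} (ht : 0 ≤ t) (h : n ≤ (⌊(2 : ℝ) ^ t⌋₊ : ℕ∞)) :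
    elog2 n ≤ ENNReal.ofReal t := by
  refine le_trans (elog2_mono h) ?_
  rw [elog2_natCast]
  refine ENNReal.ofReal_le_ofReal ?_
  rcases Nat.eq_zero_or_pos ⌊(2 : ℝ) ^ t⌋₊ with h0 | h0
  · simpa [h0] using ht
  · exact (Real.logb_le_iff_le_rpow one_lt_two (by exact_mod_cast h0)).mpr
      (Nat.floor_le (by positivity))

section DyadicSum

def dyadicSum (c : ℕ → ℝ) : ℝ := ∑' k, 2⁻¹ ^ (k + 1) * c k

variable {c c' : ℕ → ℝ}

theorem hasSum_inv_two_pow_succ : HasSum (fun k : ℕ => (2 : ℝ)⁻¹ ^ (k + 1)) 1 := by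
  convert hasSum_geometric_two' 1 using 1
  ext k
  rw [pow_succ, inv_pow]
  ring

theorem norm_inv_two_pow_mul_le (hc : ∀ k, |c k| ≤ 1) (k : ℕ) :
    ‖(2 : ℝ)⁻¹ ^ (k + 1) * c k‖ ≤ 2⁻¹ ^ (k + 1) := by
  rw [Real.norm_eq_abs, abs_mul, abs_of_pos (by positivity)]
  exact mul_le_of_le_one_right (by positivity) (hc k)

theorem summable_dyadicSum (hc : ∀ k, |c k| ≤ 1) :
    Summable fun k => (2 : ℝ)⁻¹ ^ (k + 1) * c k :=
  hasSum_inv_two_pow_succ.summable.of_norm_bounded (norm_inv_two_pow_mul_le hc)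

theorem dyadicSum_eq (hc : ∀ k, |c k| ≤ 1) :
    dyadicSum c = 2⁻¹ * (c 0 + dyadicSum fun k => c (k + 1)) := by
  rw [dyadicSum, (summable_dyadicSum hc).tsum_eq_zero_add, dyadicSum, mul_add, ← tsum_mul_left]
  simp only [pow_succ]
  ring_nf

theorem dyadicSum_sub (hc : ∀ k, |c k| ≤ 1) (hc' : ∀ k, |c' k| ≤ 1) :
    dyadicSum c - dyadicSum c' = dyadicSum (c - c') := by
  rw [dyadicSum, dyadicSum, ← (summable_dyadicSum hc).tsum_sub (summable_dyadicSum hc')]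
  simp only [dyadicSum, Pi.sub_apply, mul_sub]

theorem abs_dyadicSum_le_one (hc : ∀ k, |c k| ≤ 1) : |dyadicSum c| ≤ 1 :=
  tsum_of_norm_bounded hasSum_inv_two_pow_succ (norm_inv_two_pow_mul_le hc)

theorem dyadicSum_mem_Icc (hc : ∀ k, c k ∈ Icc 0 1) : dyadicSum c ∈ Icc 0 1 := by
  have habs : ∀ k, |c k| ≤ 1 := fun k => abs_le.mpr ⟨by linarith [(hc k).1], (hc k).2⟩
  exact ⟨tsum_nonneg fun k => mul_nonneg (by positivity) (hc k).1,
    (le_abs_self _).trans (abs_dyadicSum_le_one habs)⟩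

theorem abs_dyadicSum_le_of_eq_zero {j : ℕ} (hc : ∀ k, |c k| ≤ 1) (h : ∀ k < j, c k = 0) :
    |dyadicSum c| ≤ 2⁻¹ ^ j := by
  induction j generalizing c with
  | zero => simpa using abs_dyadicSum_le_one hc
  | succ j ih =>
    rw [dyadicSum_eq hc, h 0 j.succ_pos, zero_add, abs_mul, pow_succ', abs_of_pos (by norm_num)]
    gcongr
    exact ih (fun k => hc _) fun k hk => h (k + 1) (by omega)

theorem abs_dyadicSum_le_one_sub {n : ℕ} (hc : ∀ k, |c k| ≤ 1) (h : ∀ k, n ≤ k → c k = 0) :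
    |dyadicSum c| ≤ 1 - 2⁻¹ ^ n := by
  induction n generalizing c with
  | zero => simp [dyadicSum, h _ (Nat.zero_le _)]
  | succ n ih =>
    have htail := ih (fun k => hc (k + 1)) fun k hk => h (k + 1) (by omega)
    rw [dyadicSum_eq hc, abs_mul, abs_of_pos (by norm_num : (0 : ℝ) < 2⁻¹), pow_succ']
    linarith [abs_add_le (c 0) (dyadicSum fun k => c (k + 1)), hc 0]

theorem inv_two_pow_le_abs_dyadicSum {k₀ J : ℕ} (hc : ∀ k, |c k| ≤ 1)
    (h0 : ∀ k < k₀, c k = 0) (h1 : |c k₀| = 1) (hJ : k₀ < J) (h : ∀ k, J ≤ k → c k = 0) :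
    2⁻¹ ^ J ≤ |dyadicSum c| := by
  induction k₀ generalizing c J with
  | zero =>
    obtain ⟨J, rfl⟩ : ∃ J', J = J' + 1 := ⟨J - 1, by omega⟩
    have htail := abs_dyadicSum_le_one_sub (n := J) (fun k => hc (k + 1))
      fun k hk => h (k + 1) (by omega)
    rw [dyadicSum_eq hc, abs_mul, abs_of_pos (by norm_num : (0 : ℝ) < 2⁻¹), pow_succ']
    have := abs_sub_abs_le_abs_add (c 0) (dyadicSum fun k => c (k + 1))
    gcongr
    linarith
  | succ k₀ ih =>
    obtain ⟨J, rfl⟩ : ∃ J', J = J' + 1 := ⟨J - 1, by omega⟩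
    rw [dyadicSum_eq hc, h0 0 k₀.succ_pos, zero_add, abs_mul, pow_succ',
      abs_of_pos (by norm_num : (0 : ℝ) < 2⁻¹)]
    gcongr
    exact ih (fun k => hc _) (fun k hk => h0 (k + 1) (by omega)) h1 (by omega)
      fun k hk => h (k + 1) (by omega)

end DyadicSum

section CantorSet

variable {d : ℕ}

theorem abs_apply_sub_le_dist (x y : EuclideanSpace ℝ (Fin d)) (i : Fin d) :
    |x i - y i| ≤ dist x y := by
  simpa [Real.dist_eq] using PiLp.dist_apply_le x y i

theorem dist_le_sqrt_mul {x y : EuclideanSpace ℝ (Fin d)} {c : ℝ} (hc : 0 ≤ c)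
    (h : ∀ i, |x i - y i| ≤ c) : dist x y ≤ √d * c := by
  rw [EuclideanSpace.dist_eq, ← Real.sqrt_sq hc, ← Real.sqrt_mul (Nat.cast_nonneg d)]
  refine Real.sqrt_le_sqrt ?_
  calc ∑ i, dist (x i) (y i) ^ 2 ≤ ∑ _i : Fin d, c ^ 2 := Finset.sum_le_sum fun i _ => by
        rw [Real.dist_eq]
        exact pow_le_pow_left₀ (abs_nonneg _) (h i) 2
    _ = d * c ^ 2 := by simp

def binaryDigit (n i : ℕ) : ℝ := if n.testBit i then 1 else 0

theorem binaryDigit_mem_Icc (n i : ℕ) : binaryDigit n i ∈ Icc 0 1 := by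
  unfold binaryDigit; split <;> norm_num

theorem abs_binaryDigit_le_one (n i : ℕ) : |binaryDigit n i| ≤ 1 := by
  unfold binaryDigit; split <;> norm_num

theorem abs_binaryDigit_sub_le (n n' i : ℕ) : |binaryDigit n i - binaryDigit n' i| ≤ 1 := by
  unfold binaryDigit; split <;> split <;> norm_num

theorem abs_binaryDigit_sub_eq_one {n n' i : ℕ} (h : n.testBit i ≠ n'.testBit i) :
    |binaryDigit n i - binaryDigit n' i| = 1 := by
  unfold binaryDigit
  cases hn : n.testBit i <;> cases hn' : n'.testBit i <;> simp_all

theorem exists_testBit_ne_of_lt_two_pow {n n' : ℕ} (hn : n < 2 ^ d) (hn' : n' < 2 ^ d)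
    (h : n ≠ n') : ∃ i < d, n.testBit i ≠ n'.testBit i := by
  obtain ⟨i, hi⟩ := Nat.exists_testBit_ne_of_ne h
  refine ⟨i, ?_, hi⟩
  by_contra! hdi
  have hpow : 2 ^ d ≤ 2 ^ i := Nat.pow_le_pow_right two_pos hdi
  exact hi (by rw [Nat.testBit_lt_two_pow (hn.trans_le hpow),
    Nat.testBit_lt_two_pow (hn'.trans_le hpow)])

/-- The digit `e k` of level `k` selects, through its binary digits, a vertex of the cube
`{0,1}ᵈ` scaled by `2⁻⁽ᵃ⁺ᵏ⁺¹⁾`. -/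
def cantorPoint (d a : ℕ) (e : ℕ → ℕ) : EuclideanSpace ℝ (Fin d) :=
  WithLp.toLp 2 fun i => 2⁻¹ ^ a * (5 + dyadicSum fun k => binaryDigit (e k) i)

def digits (n : ℕ → ℕ) : Set (ℕ → ℕ) := univ.pi fun k => Iio (2 ^ n k)

def cantorSet (d a : ℕ) (n : ℕ → ℕ) : Set (EuclideanSpace ℝ (Fin d)) :=
  cantorPoint d a '' digits n

variable {a : ℕ} {n : ℕ → ℕ} {e e' : ℕ → ℕ}

theorem lt_two_pow_of_mem_digits (hn : ∀ k, n k ≤ d) (he : e ∈ digits n) (k : ℕ) :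
    e k < 2 ^ d :=
  (he k (mem_univ k)).trans_le (Nat.pow_le_pow_right two_pos (hn k))

theorem apply_mem_Icc_of_mem_cantorSet {x : EuclideanSpace ℝ (Fin d)} (hx : x ∈ cantorSet d a n)
    (i : Fin d) : x i ∈ Icc (5 * 2⁻¹ ^ a) (6 * 2⁻¹ ^ a) := by
  obtain ⟨e, -, rfl⟩ := hx
  obtain ⟨h0, h1⟩ := dyadicSum_mem_Icc fun k => binaryDigit_mem_Icc (e k) i
  have : (0 : ℝ) < 2⁻¹ ^ a := by positivity
  simp only [cantorPoint, PiLp.toLp_apply]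
  constructor <;> nlinarith

theorem cantorPoint_apply_sub (a : ℕ) (e e' : ℕ → ℕ) (i : Fin d) :
    cantorPoint d a e i - cantorPoint d a e' i =
      2⁻¹ ^ a * dyadicSum fun k => binaryDigit (e k) i - binaryDigit (e' k) i := by
  simp only [cantorPoint, PiLp.toLp_apply]
  rw [← mul_sub, add_sub_add_left_eq_sub,
    dyadicSum_sub (fun k => abs_binaryDigit_le_one _ _) (fun k => abs_binaryDigit_le_one _ _)]
  rfl

theorem dist_cantorPoint_le {j : ℕ} (h : ∀ k < j, e k = e' k) :
    dist (cantorPoint d a e) (cantorPoint d a e') ≤ √d * 2⁻¹ ^ (a + j) := by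
  refine dist_le_sqrt_mul (by positivity) fun i => ?_
  rw [cantorPoint_apply_sub, abs_mul, abs_of_pos (by positivity), pow_add]
  gcongr
  exact abs_dyadicSum_le_of_eq_zero (fun k => abs_binaryDigit_sub_le _ _ _)
    fun k hk => by rw [h k hk, sub_self]

theorem inv_two_pow_le_dist_cantorPoint {J : ℕ} (he : ∀ k, e k < 2 ^ d) (he' : ∀ k, e' k < 2 ^ d)
    (hne : ∃ k < J, e k ≠ e' k) (heq : ∀ k, J ≤ k → e k = e' k) :
    2⁻¹ ^ (a + J) ≤ dist (cantorPoint d a e) (cantorPoint d a e') := by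
  classical
  have hex : ∃ k, e k ≠ e' k := hne.imp fun _ => And.right
  obtain ⟨k, hkJ, hk⟩ := hne
  obtain ⟨i, hid, hi⟩ := exists_testBit_ne_of_lt_two_pow (he (Nat.find hex)) (he' (Nat.find hex))
    (Nat.find_spec hex)
  calc (2 : ℝ)⁻¹ ^ (a + J)
      ≤ 2⁻¹ ^ a * |dyadicSum fun k => binaryDigit (e k) i - binaryDigit (e' k) i| := by
        rw [pow_add]
        gcongr
        refine inv_two_pow_le_abs_dyadicSum (fun k => abs_binaryDigit_sub_le _ _ _)
          (fun k hk => ?_) (abs_binaryDigit_sub_eq_one hi) ((Nat.find_min' hex hk).trans_lt hkJ)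
          fun k hk => by rw [heq k hk, sub_self]
        rw [not_ne_iff.mp (Nat.find_min hex hk), sub_self]
    _ = |cantorPoint d a e ⟨i, hid⟩ - cantorPoint d a e' ⟨i, hid⟩| := by
        rw [cantorPoint_apply_sub, abs_mul, abs_of_pos (by positivity : (0 : ℝ) < 2⁻¹ ^ a)]
    _ ≤ _ := abs_apply_sub_le_dist _ _ _

theorem continuous_cantorPoint (d a : ℕ) : Continuous (cantorPoint d a) := by
  refine (PiLp.continuous_toLp 2 _).comp (continuous_pi fun i => ?_)
  refine continuous_const.mul (continuous_const.add ?_)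
  refine continuous_tsum (fun k => ?_) hasSum_inv_two_pow_succ.summable fun k e =>
    norm_inv_two_pow_mul_le (fun k => abs_binaryDigit_le_one (e k) i) k
  exact (continuous_of_discreteTopology (f := fun m : ℕ => (2 : ℝ)⁻¹ ^ (k + 1) *
    binaryDigit m i)).comp (continuous_apply k)

theorem isCompact_cantorSet (d a : ℕ) (n : ℕ → ℕ) : IsCompact (cantorSet d a n) :=
  (isCompact_univ_pi fun _ => (finite_Iio _).isCompact).image (continuous_cantorPoint d a)

end CantorSet

section Counting

variable {d a : ℕ} {n : ℕ → ℕ}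

def splice (e : ℕ → ℕ) (p : ℕ) {q : ℕ} (τ : Fin q → ℕ) : ℕ → ℕ := fun k =>
  if k < p then e k else if h : k - p < q then τ ⟨k - p, h⟩ else 0

theorem splice_add {e : ℕ → ℕ} {p q : ℕ} (τ : Fin q → ℕ) (i : Fin q) :
    splice e p τ (p + i) = τ i := by
  simp [splice]

theorem splice_mem_digits {e : ℕ → ℕ} (he : e ∈ digits n) {p q : ℕ} {τ : Fin q → ℕ}
    (hτ : τ ∈ Fintype.piFinset fun i : Fin q => Finset.range (2 ^ n (p + i))) :
    splice e p τ ∈ digits n := by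
  intro k _
  simp only [splice, mem_Iio]
  split_ifs with hkp hkq
  · exact he k (mem_univ k)
  · have := Finset.mem_range.mp (Fintype.mem_piFinset.mp hτ ⟨k - p, hkq⟩)
    rwa [Nat.add_sub_cancel' (not_lt.mp hkp)] at this
  · positivity

theorem exists_separated_finset (hn : ∀ k, n k ≤ d) {e : ℕ → ℕ} (he : e ∈ digits n)
    (p q : ℕ) :
    ∃ t : Finset (EuclideanSpace ℝ (Fin d)), t.card = 2 ^ ∑ k ∈ Finset.range q, n (p + k) ∧
      (∀ y ∈ t, ∃ e' ∈ digits n, (∀ k < p, e' k = e k) ∧ cantorPoint d a e' = y) ∧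
      (t : Set (EuclideanSpace ℝ (Fin d))).Pairwise fun y z => 2⁻¹ ^ (a + (p + q)) ≤ dist y z := by
  classical
  set W := Fintype.piFinset fun i : Fin q => Finset.range (2 ^ n (p + i))
  have hsep : ∀ τ ∈ W, ∀ τ' ∈ W, τ ≠ τ' → 2⁻¹ ^ (a + (p + q)) ≤
      dist (cantorPoint d a (splice e p τ)) (cantorPoint d a (splice e p τ')) := by
    intro τ hτ τ' hτ' hne
    obtain ⟨i, hi⟩ := Function.ne_iff.mp hne
    refine inv_two_pow_le_dist_cantorPoint (lt_two_pow_of_mem_digits hn (splice_mem_digits he hτ))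
      (lt_two_pow_of_mem_digits hn (splice_mem_digits he hτ')) ⟨p + i, by omega, ?_⟩
      fun k hk => ?_
    · rwa [splice_add, splice_add]
    · simp [splice, show ¬k < p by omega, show ¬k - p < q by omega]
  refine ⟨W.image fun τ => cantorPoint d a (splice e p τ), ?_, ?_, ?_⟩
  · rw [Finset.card_image_of_injOn, Fintype.card_piFinset, Finset.prod_congr rfl
      fun i _ => Finset.card_range _, Fin.prod_univ_eq_prod_range (fun k => 2 ^ n (p + k)),
      Finset.prod_pow_eq_pow_sum]
    intro τ hτ τ' hτ' h
    by_contra hne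
    have := hsep τ hτ τ' hτ' hne
    rw [show cantorPoint d a (splice e p τ) = _ from h, dist_self] at this
    exact (this.trans_lt' (by positivity)).false
  · intro y hy
    obtain ⟨τ, hτ, rfl⟩ := Finset.mem_image.mp hy
    exact ⟨_, splice_mem_digits he hτ, fun k hk => if_pos hk, rfl⟩
  · intro y hy z hz hyz
    obtain ⟨τ, hτ, rfl⟩ := Finset.mem_image.mp hy
    obtain ⟨τ', hτ', rfl⟩ := Finset.mem_image.mp hz
    exact hsep τ hτ τ' hτ' fun h => hyz (by rw [h])

theorem card_le_of_pairwise_lt_dist {s : Finset (EuclideanSpace ℝ (Fin d))}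
    (hs : ↑s ⊆ cantorSet d a n) (J : ℕ)
    (hsep : (s : Set (EuclideanSpace ℝ (Fin d))).Pairwise fun y z =>
      √d * 2⁻¹ ^ (a + J) < dist y z) :
    s.card ≤ 2 ^ ∑ k ∈ Finset.range J, n k := by
  classical
  -- points with the same first `J` digits are too close to both lie in `s`
  set σ := Function.invFunOn (cantorPoint d a) (digits n)
  have hσ : ∀ y ∈ s, σ y ∈ digits n ∧ cantorPoint d a (σ y) = y := fun y hy =>
    Function.invFunOn_pos (hs hy)
  calc s.card ≤ (Fintype.piFinset fun k : Fin J => Finset.range (2 ^ n k)).card := by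
        refine Finset.card_le_card_of_injOn (fun y (k : Fin J) => σ y k) (fun y hy => ?_)
          fun y hy z hz h => ?_
        · exact Fintype.mem_piFinset.mpr fun k =>
            Finset.mem_range.mpr ((hσ y hy).1 k (mem_univ _))
        · by_contra hyz
          refine (hsep hy hz hyz).not_ge ?_
          rw [← (hσ y hy).2, ← (hσ z hz).2]
          exact dist_cantorPoint_le fun k hk => congrFun h ⟨k, hk⟩
    _ = 2 ^ ∑ k ∈ Finset.range J, n k := by
        rw [Fintype.card_piFinset, Finset.prod_congr rfl fun i _ => Finset.card_range _,
          Fin.prod_univ_eq_prod_range (fun k => 2 ^ n k), Finset.prod_pow_eq_pow_sum]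

end Counting

section Scales

variable {d : ℕ}

theorem inv_two_pow_le_inv_two_pow {i j : ℕ} (h : i ≤ j) : (2 : ℝ)⁻¹ ^ j ≤ 2⁻¹ ^ i :=
  pow_le_pow_of_le_one (by norm_num) (by norm_num) h

theorem inv_two_pow_eq_rpow (n : ℕ) : (2 : ℝ)⁻¹ ^ n = 2 ^ (-(n : ℝ)) := by
  rw [Real.rpow_neg zero_le_two, Real.rpow_natCast, inv_pow]

theorem rpow_neg_lt_inv_two_pow {n : ℕ} {v : ℝ} (h : n < v) : (2 : ℝ) ^ (-v) < 2⁻¹ ^ n := by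
  rw [inv_two_pow_eq_rpow]
  exact Real.rpow_lt_rpow_of_exponent_lt one_lt_two (by linarith)

theorem four_mul_rpow_neg_lt_inv_two_pow {n : ℕ} {u : ℝ} (h : n + 2 < u) :
    4 * (2 : ℝ) ^ (-u) < 2⁻¹ ^ n := by
  have h4 : 4 * (2 : ℝ) ^ (-u) = 2 ^ (-(u - 2)) := by
    rw [neg_sub, sub_eq_add_neg, Real.rpow_add two_pos]
    norm_num
  rw [h4]
  exact rpow_neg_lt_inv_two_pow (by linarith)

theorem sqrt_mul_inv_two_pow_le {N : ℕ} {v : ℝ} (h : v ≤ N) :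
    √d * (2 : ℝ)⁻¹ ^ (N + d) ≤ 2 ^ (-v) := by
  have hsqrt : √d ≤ 2 ^ d := by
    refine Real.sqrt_le_iff.mpr ⟨by positivity, ?_⟩
    have h1 : (d : ℝ) < 2 ^ d := by exact_mod_cast Nat.lt_two_pow_self
    nlinarith [one_le_pow₀ (one_le_two : (1 : ℝ) ≤ 2) (n := d)]
  calc √d * (2 : ℝ)⁻¹ ^ (N + d) ≤ 2 ^ d * 2⁻¹ ^ (N + d) := by gcongr
    _ = 2⁻¹ ^ N := by rw [pow_add, inv_pow 2 d]; field_simp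
    _ ≤ 2 ^ (-v) := by
        rw [inv_two_pow_eq_rpow]
        exact Real.rpow_le_rpow_of_exponent_le one_le_two (by linarith)

end Scales

section BranchingSet

variable {d : ℕ} {f : ℝ → ℝ → ℝ}

def profile (f : ℝ → ℝ → ℝ) (m k : ℕ) : ℝ := f (m + 3 + k) (m + 3)

def exponent (f : ℝ → ℝ → ℝ) (m k : ℕ) : ℕ := ⌈profile f m (k + 1)⌉₊ - ⌈profile f m k⌉₊

/-- The coordinates of tree `m` lie in `[5/8, 6/8] · 2⁻ᵐ`, so distinct trees are `2⁻⁽ᵐ⁺²⁾` apart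
and accumulate only at `0`. -/
def branchingSet (d : ℕ) (f : ℝ → ℝ → ℝ) : Set (EuclideanSpace ℝ (Fin d)) :=
  insert 0 (⋃ m, cantorSet d (m + 3) (exponent f m))

theorem profile_zero (hf : MemL d f) (m : ℕ) : profile f m 0 = 0 := by
  simpa [profile] using hf.2.1 (m + 3)

theorem monotone_profile (hf : MemL d f) (m : ℕ) : Monotone (profile f m) := fun k k' h =>
  hf.monotone_fst (by simp) (by simp [h])

theorem profile_succ_le (hf : MemL d f) (m k : ℕ) : profile f m (k + 1) ≤ profile f m k + d := by
  have h := hf.2.2.2 (m + 3) (m + 3 + (k + 1 : ℕ)) (m + 3 + k) (by simp; positivity) (by simp)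
  rw [show (m : ℝ) + 3 + (k + 1 : ℕ) - (m + 3 + k) = 1 by push_cast; ring, abs_one,
    mul_one] at h
  simp only [profile]
  linarith [(abs_le.mp h).2]

theorem profile_nonneg (hf : MemL d f) (m k : ℕ) : 0 ≤ profile f m k :=
  profile_zero hf m ▸ monotone_profile hf m (Nat.zero_le k)

theorem exponent_le (hf : MemL d f) (m k : ℕ) : exponent f m k ≤ d := by
  have hceil : ⌈profile f m (k + 1)⌉₊ ≤ ⌈profile f m k⌉₊ + d := by
    rw [← Nat.ceil_add_natCast (profile_nonneg hf m k)]
    exact Nat.ceil_mono (profile_succ_le hf m k)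
  exact Nat.sub_le_iff_le_add'.mpr hceil

theorem sum_exponent (hf : MemL d f) (m p q : ℕ) :
    ∑ k ∈ Finset.range q, exponent f m (p + k) =
      ⌈profile f m (p + q)⌉₊ - ⌈profile f m p⌉₊ := by
  have hmono : Monotone fun k => ⌈profile f m (p + k)⌉₊ := fun k k' h =>
    Nat.ceil_mono (monotone_profile hf m (by omega))
  simpa [exponent, add_assoc] using Finset.sum_range_tsub hmono q

theorem sub_le_ceil_profile_sub (hf : MemL d f) {m p q : ℕ} {u w : ℝ} (hpw : m + 3 + p ≤ w)
    (hwq : w ≤ m + 3 + (p + q : ℕ)) (hwu : w ≤ u) :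
    f u w - d * |m + 3 + (p + q : ℕ) - u| - 1 ≤
      ((⌈profile f m (p + q)⌉₊ - ⌈profile f m p⌉₊ : ℕ) : ℝ) := by
  rw [Nat.cast_sub (Nat.ceil_mono (monotone_profile hf m (Nat.le_add_right p q)))]
  have hceil := Nat.ceil_lt_add_one (profile_nonneg hf m p)
  have hgain := hf.sub_le_apply_sub (A := m + 3) (by simp) hpw hwq hwu
  simp only [profile] at hceil ⊢
  linarith [Nat.le_ceil (f (m + 3 + (p + q : ℕ)) (m + 3))]

theorem ceil_profile_lt (hf : MemL d f) {m J : ℕ} {u w : ℝ} (hwm : w ≤ m + 3) (hmu : m + 3 ≤ u) :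
    (⌈profile f m J⌉₊ : ℝ) < f u w + d * |m + 3 + J - u| + 1 := by
  have hceil := Nat.ceil_lt_add_one (profile_nonneg hf m J)
  have hlip := hf.apply_le_add hwm hmu (by simp : (m : ℝ) + 3 ≤ m + 3 + J)
  simp only [profile] at hceil ⊢
  linarith

theorem zero_mem_digits (n : ℕ → ℕ) : (0 : ℕ → ℕ) ∈ digits n := fun k _ =>
  Nat.two_pow_pos (n k)

theorem apply_mem_Icc_of_mem_tree {m : ℕ} {n : ℕ → ℕ} {x : EuclideanSpace ℝ (Fin d)}
    (hx : x ∈ cantorSet d (m + 3) n) (i : Fin d) : x i ∈ Icc 0 (2⁻¹ ^ m) := by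
  obtain ⟨h5, h6⟩ := apply_mem_Icc_of_mem_cantorSet hx i
  rw [pow_add] at h5 h6
  have : (0 : ℝ) < 2⁻¹ ^ m := by positivity
  constructor <;> nlinarith

theorem dist_le_of_forall_mem_Icc {x y : EuclideanSpace ℝ (Fin d)} {c : ℝ} (hc : 0 ≤ c)
    (hx : ∀ i, x i ∈ Icc 0 c) (hy : ∀ i, y i ∈ Icc 0 c) : dist x y ≤ √d * c :=
  dist_le_sqrt_mul hc fun i => abs_sub_le_of_nonneg_of_le (hx i).1 (hx i).2 (hy i).1 (hy i).2

theorem isCompact_branchingSet (d : ℕ) (f : ℝ → ℝ → ℝ) : IsCompact (branchingSet d f) := by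
  refine isCompact_insert_iUnion (fun m => isCompact_cantorSet _ _ _) ?_
  have hr : Tendsto (fun m : ℕ => √d * (2 : ℝ)⁻¹ ^ m) atTop (𝓝 0) := by
    simpa using (tendsto_pow_atTop_nhds_zero_of_lt_one (by norm_num : (0 : ℝ) ≤ 2⁻¹)
      (by norm_num)).const_mul √d
  refine ((tendsto_closedBall_smallSets 0).comp hr).smallSets_mono
    (Eventually.of_forall fun m x hx => ?_)
  rw [Function.comp_apply, mem_closedBall]
  exact dist_le_of_forall_mem_Icc (by positivity) (apply_mem_Icc_of_mem_tree hx) fun i => by simp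

theorem inv_two_pow_le_dist_of_notMem (hd : 0 < d) {m : ℕ} {x y : EuclideanSpace ℝ (Fin d)}
    (hx : x ∈ cantorSet d (m + 3) (exponent f m)) (hy : y ∈ branchingSet d f)
    (hym : y ∉ cantorSet d (m + 3) (exponent f m)) : 2⁻¹ ^ (m + 2) ≤ dist x y := by
  let i : Fin d := ⟨0, hd⟩
  obtain ⟨hx5, hx6⟩ := apply_mem_Icc_of_mem_cantorSet hx i
  have hw : (2 : ℝ)⁻¹ ^ (m + 3) = 2⁻¹ ^ (m + 2) / 2 := by rw [pow_succ]; ring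
  have hw0 : (0 : ℝ) < 2⁻¹ ^ (m + 2) := by positivity
  have hyi : y i ≤ 3 / 2 * 2⁻¹ ^ (m + 2) ∨ 5 * 2⁻¹ ^ (m + 2) ≤ y i := by
    rcases hy with rfl | hy
    · exact Or.inl (by simp)
    obtain ⟨j, hj⟩ := mem_iUnion.mp hy
    obtain ⟨hy5, hy6⟩ := apply_mem_Icc_of_mem_cantorSet hj i
    rcases lt_trichotomy j m with h | rfl | h
    · right
      linarith [inv_two_pow_le_inv_two_pow (show j + 3 ≤ m + 2 by omega)]
    · exact absurd hj hym
    · left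
      have h4 : (2 : ℝ)⁻¹ ^ (m + 4) = 2⁻¹ ^ (m + 2) / 4 := by rw [pow_add, pow_add]; ring
      linarith [inv_two_pow_le_inv_two_pow (show m + 4 ≤ j + 3 by omega)]
  refine le_trans ?_ (abs_apply_sub_le_dist x y i)
  rw [le_abs]
  rcases hyi with hyi | hyi
  · left; linarith
  · right; linarith

theorem exists_subtree_near {x : EuclideanSpace ℝ (Fin d)} (hx : x ∈ branchingSet d f) (L : ℕ) :
    ∃ m p, m + p ≤ L ∧ ∃ e ∈ digits (exponent f m), ∀ e' ∈ digits (exponent f m),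
      (∀ k < p, e' k = e k) → dist x (cantorPoint d (m + 3) e') ≤ √d * 2⁻¹ ^ L := by
  by_cases hsmall : ∀ i, x i ∈ Icc 0 (2⁻¹ ^ L)
  · exact ⟨L, 0, le_rfl, 0, zero_mem_digits _, fun e' he' _ => dist_le_of_forall_mem_Icc
      (by positivity) hsmall (apply_mem_Icc_of_mem_tree ⟨e', he', rfl⟩)⟩
  rcases hx with rfl | hx
  · exact absurd (fun i => by simp) hsmall
  obtain ⟨j, e, he, rfl⟩ := mem_iUnion.mp hx
  have hjL : j < L := by
    by_contra! hLj
    exact hsmall fun i => Icc_subset_Icc le_rfl (inv_two_pow_le_inv_two_pow hLj)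
      (apply_mem_Icc_of_mem_tree ⟨e, he, rfl⟩ i)
  refine ⟨j, L - (j + 3), by omega, e, he, fun e' _ he' => ?_⟩
  calc dist (cantorPoint d (j + 3) e) (cantorPoint d (j + 3) e')
      ≤ √d * 2⁻¹ ^ (j + 3 + (L - (j + 3))) := dist_cantorPoint_le fun k hk => (he' k hk).symm
    _ ≤ √d * 2⁻¹ ^ L := mul_le_mul_of_nonneg_left
        (inv_two_pow_le_inv_two_pow (show L ≤ j + 3 + (L - (j + 3)) by omega))
        (Real.sqrt_nonneg _)

theorem two_pow_le_packingNumber (hf : MemL d f) (x : branchingSet d f) {m p q : ℕ}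
    {e : ℕ → ℕ} (he : e ∈ digits (exponent f m)) {r ρ : ℝ}
    (hnear : ∀ e' ∈ digits (exponent f m), (∀ k < p, e' k = e k) →
      dist (x : EuclideanSpace ℝ (Fin d)) (cantorPoint d (m + 3) e') ≤ ρ)
    (hr : 4 * r < 2⁻¹ ^ (m + 3 + (p + q))) :
    ((2 ^ (⌈profile f m (p + q)⌉₊ - ⌈profile f m p⌉₊) : ℕ) : ℕ∞) ≤
      packingNumber r (closedBall x ρ) := by
  obtain ⟨t, hcard, ht, hsep⟩ := exists_separated_finset (a := m + 3) (exponent_le hf m) he p q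
  rw [← sum_exponent hf, ← hcard]
  refine card_le_packingNumber_closedBall x (fun y hy => ?_) (fun y hy => ?_)
    (hsep.mono' fun y z h => hr.trans_le h)
  · obtain ⟨e', he', -, rfl⟩ := ht y hy
    exact mem_insert_of_mem _ (mem_iUnion_of_mem m ⟨e', he', rfl⟩)
  · obtain ⟨e', he', he'e, rfl⟩ := ht y hy
    rw [mem_closedBall, dist_comm]
    exact hnear e' he' he'e

theorem packingNumber_le_two_pow (hd : 0 < d) {m J : ℕ} {x : branchingSet d f}
    (hx : (x : EuclideanSpace ℝ (Fin d)) ∈ cantorSet d (m + 3) (exponent f m)) {r ρ : ℝ}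
    (hr : √d * 2⁻¹ ^ (m + 3 + J) ≤ 2 * r) (hρ : ρ < 2⁻¹ ^ (m + 2)) :
    packingNumber r (closedBall x ρ) ≤ ((2 ^ ∑ k ∈ Finset.range J, exponent f m k : ℕ) : ℕ∞) := by
  refine packingNumber_closedBall_le (by nlinarith [Real.sqrt_nonneg d,
      (by positivity : (0 : ℝ) < 2⁻¹ ^ (m + 3 + J))]) x fun s hs hsep => ?_
  refine card_le_of_pairwise_lt_dist (a := m + 3) (fun y hy => ?_) J
    (hsep.mono' fun y z h => hr.trans_lt h)
  by_contra hyT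
  have hfar := inv_two_pow_le_dist_of_notMem hd hx (hs hy).1 hyT
  have hnear := (hs hy).2
  rw [mem_closedBall, dist_comm] at hnear
  linarith

end BranchingSet

variable {d : ℕ} {f : ℝ → ℝ → ℝ}

theorem ceil_le_packingNumber (hf : MemL d f) {u v : ℝ} (hv : 0 ≤ v) (hvu : v + d + 7 ≤ u)
    (x : branchingSet d f) :
    (⌈(2 : ℝ) ^ (f u (v + d + 4) - (3 * d + 1))⌉₊ : ℕ∞) ≤
      packingNumber ((2 : ℝ) ^ (-u)) (closedBall x (2 ^ (-v))) := by
  set L := ⌈v⌉₊ + d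
  obtain ⟨m, p, hmp, e, he, hnear⟩ := exists_subtree_near x.2 L
  -- `N` is the level of the scale `2⁻ᵘ`, with a margin of 3 that pays for the `4r` separation
  set N := ⌈u⌉₊ - 3
  have hN : u - 3 ≤ N ∧ (N : ℝ) < u - 2 := by
    have h3 : 3 ≤ ⌈u⌉₊ := Nat.lt_ceil.mpr (by norm_num; linarith)
    rw [Nat.cast_sub h3]
    push_cast
    constructor <;> linarith [Nat.le_ceil u, Nat.ceil_lt_add_one (by linarith : 0 ≤ u)]
  have hmp' : (m : ℝ) + p < v + d + 1 := by
    have := (Nat.cast_le (α := ℝ)).mpr hmp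
    push_cast [L] at this
    linarith [Nat.ceil_lt_add_one hv]
  have hmpN : m + 3 + p ≤ N := by
    have : m + p + 3 < N + 1 := by exact_mod_cast (by linarith : (m : ℝ) + p + 3 < N + 1)
    omega
  set q := N - (m + 3 + p)
  have hq : m + 3 + (p + q) = N := by omega
  have hNq : (m : ℝ) + 3 + (p + q : ℕ) = N := by rw [← hq]; push_cast; ring
  have hexp : f u (v + d + 4) - (3 * d + 1) ≤
      ((⌈profile f m (p + q)⌉₊ - ⌈profile f m p⌉₊ : ℕ) : ℝ) := by
    have hgain := sub_le_ceil_profile_sub hf (m := m) (p := p) (q := q) (u := u)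
      (w := v + d + 4) (by linarith) (by rw [hNq]; linarith) (by linarith)
    have hNu : (d : ℝ) * |N - u| ≤ 3 * d := by
      rw [abs_of_nonpos (by linarith)]
      nlinarith [(Nat.cast_nonneg d : (0 : ℝ) ≤ d)]
    rw [hNq] at hgain
    linarith
  refine le_trans ?_ (two_pow_le_packingNumber hf x he
    (fun e' he' he'e => (hnear e' he' he'e).trans (sqrt_mul_inv_two_pow_le (Nat.le_ceil v)))
    (by rw [hq]; exact four_mul_rpow_neg_lt_inv_two_pow (by linarith)))
  refine Nat.cast_le.mpr (Nat.ceil_le.mpr ?_)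
  rw [Nat.cast_pow, Nat.cast_ofNat, ← Real.rpow_natCast]
  exact Real.rpow_le_rpow_of_exponent_le one_le_two hexp

theorem packingNumber_le_floor (hd : 0 < d) (hf : MemL d f) {u v : ℝ} (hv : 4 ≤ v)
    (hvu : v ≤ u) :
    ∃ x : branchingSet d f, packingNumber ((2 : ℝ) ^ (-u)) (closedBall x (2 ^ (-v))) ≤
      (⌊(2 : ℝ) ^ (f u (v - 2) + (d ^ 2 + d + 1))⌋₊ : ℕ∞) := by
  -- centred in the tree starting just below level `v`, the ball meets no other tree
  set m := ⌊v⌋₊ - 4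
  have hm : v - 2 < m + 3 ∧ (m : ℝ) + 3 ≤ v - 1 := by
    have h4 : 4 ≤ ⌊v⌋₊ := Nat.le_floor (by norm_num; linarith)
    rw [Nat.cast_sub h4]
    push_cast
    constructor <;> linarith [Nat.floor_le (by linarith : 0 ≤ v), Nat.lt_floor_add_one v]
  set N := ⌈u⌉₊ + d
  have hN : u ≤ N ∧ (N : ℝ) < u + d + 1 := by
    push_cast [N]
    constructor <;> linarith [Nat.le_ceil u, Nat.ceil_lt_add_one (by linarith : 0 ≤ u)]
  have hmN : m + 3 ≤ N := by exact_mod_cast (by linarith : (m : ℝ) + 3 ≤ N)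
  set J := N - (m + 3)
  have hJ : m + 3 + J = N := by omega
  have hx₀ : cantorPoint d (m + 3) 0 ∈ cantorSet d (m + 3) (exponent f m) :=
    ⟨0, zero_mem_digits _, rfl⟩
  refine ⟨⟨_, mem_insert_of_mem _ (mem_iUnion_of_mem m hx₀)⟩, le_trans
    (packingNumber_le_two_pow hd (J := J) hx₀ ?_ (rpow_neg_lt_inv_two_pow (by push_cast; linarith)))
    (Nat.cast_le.mpr (Nat.le_floor ?_))⟩
  · rw [hJ]
    linarith [sqrt_mul_inv_two_pow_le (d := d) (Nat.le_ceil u), Real.rpow_pos_of_pos two_pos (-u)]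
  · have hsum : ∑ k ∈ Finset.range J, exponent f m k = ⌈profile f m J⌉₊ := by
      simpa [profile_zero hf] using sum_exponent hf m 0 J
    rw [hsum, Nat.cast_pow, Nat.cast_ofNat, ← Real.rpow_natCast]
    refine Real.rpow_le_rpow_of_exponent_le one_le_two ?_
    have hceil := ceil_profile_lt hf (J := J) hm.1.le (by linarith)
    have hNJ : (m : ℝ) + 3 + J = N := by rw [← hJ]; push_cast; ring
    have hNu : (d : ℝ) * |N - u| ≤ d * (d + 1) := by
      rw [abs_of_nonneg (by linarith)]
      nlinarith [(Nat.cast_nonneg d : (0 : ℝ) ≤ d)]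
    rw [hNJ] at hceil
    nlinarith

end BranchingAttainable

open BranchingAttainable

/-- Every `f ∈ L(d)` is attained (up to a constant depending only on `d`) as
the branching function of a nonempty compact subset of `ℝ^d`. -/
theorem branching_function_attainable (d : ℕ) (hd : 0 < d) :
    ∃ z : ℝ, 0 ≤ z ∧ ∀ f : ℝ → ℝ → ℝ, MemL d f →
      ∃ X : Set (EuclideanSpace ℝ (Fin d)), X.Nonempty ∧ IsCompact X ∧
        ∀ u v : ℝ, 0 ≤ v → v ≤ u →
          (v ≤ u - z → ENNReal.ofReal (f u (v + z) - z) ≤ brL X u v) ∧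
          (z ≤ v → brL X u v ≤ ENNReal.ofReal (f u (v - z) + z)) := by
  refine ⟨d ^ 2 + 3 * d + 7, by positivity, fun f hf => ⟨branchingSet d f, ⟨0, mem_insert _ _⟩,
    isCompact_branchingSet d f, fun u v hv hvu => ⟨fun hvz => ?_, fun hzv => ?_⟩⟩⟩
  · have hf_le := hf.antitone_snd (u := u) (a := v + d + 4) (b := v + (d ^ 2 + 3 * d + 7))
      (by nlinarith) (by linarith)
    calc ENNReal.ofReal (f u (v + (d ^ 2 + 3 * d + 7)) - (d ^ 2 + 3 * d + 7))
        ≤ ENNReal.ofReal (f u (v + d + 4) - (3 * d + 1)) :=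
          ENNReal.ofReal_le_ofReal (by nlinarith)
      _ ≤ brL (branchingSet d f) u v :=
          ofReal_le_elog2 (le_iInf fun x => ceil_le_packingNumber hf hv (by nlinarith) x)
  · have hf_le := hf.antitone_snd (u := u) (a := v - (d ^ 2 + 3 * d + 7)) (b := v - 2)
      (by nlinarith) (by linarith)
    obtain ⟨x, hx⟩ := packingNumber_le_floor hd hf (by nlinarith) hvu
    calc brL (branchingSet d f) u v ≤ ENNReal.ofReal (f u (v - 2) + (d ^ 2 + d + 1)) :=
          elog2_le_ofReal (by nlinarith [hf.1 u (v - 2) (by linarith)])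
            ((iInf_le _ x).trans hx)
      _ ≤ ENNReal.ofReal (f u (v - (d ^ 2 + 3 * d + 7)) + (d ^ 2 + 3 * d + 7)) :=
          ENNReal.ofReal_le_ofReal (by nlinarith)

end
end

section
/- Let α ≥ 0, z ∈ ℝ, and let g : ℝ → [0,∞) be an increasing α-Lipschitz function with g(u) = 0 for all u ≤ z. Then: (a) the function h_{g,z} belongs to L(α). (b) Moreover, if f : Δ → [0,∞) satisfies f(u,u) = 0 for all u, f(u,v) ≥ f(u,w) + f(w,v) for all v ≤ w ≤ u, and f(u,v) − f(w,v) ≤ α(u−w) + η(u) for all v ≤ w ≤ u (where η : ℝ → [0,∞)), and if f(u,z) − η(u) ≤ g(u) ≤ f(u,z) for all u ≥ z, then h_{g,z}(u,v) ≥ f(u,v) − η(u) for all (u,v) ∈ Δ. -/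
open Metric Set Filter
open scoped ENNReal NNReal

noncomputable section

/-- The function `h_{g,z}` lies in `L(α)` and dominates, up to error `η`,
any approximately Lipschitz superadditive `f` agreeing with `g` on the strip at level `z`. -/
theorem hFun_mem_L_and_dominates (α z : ℝ) (hα : 0 ≤ α) (g : ℝ → ℝ)
    (hg0 : ∀ u : ℝ, 0 ≤ g u) (hgmono : Monotone g)
    (hglip : ∀ u₁ u₂ : ℝ, |g u₁ - g u₂| ≤ α * |u₁ - u₂|)
    (hgz : ∀ u : ℝ, u ≤ z → g u = 0) :
    MemL α (hFun α g z) ∧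
    (∀ (f : ℝ → ℝ → ℝ) (η : ℝ → ℝ), (∀ u : ℝ, 0 ≤ η u) →
      (∀ u v : ℝ, v ≤ u → 0 ≤ f u v) → (∀ u : ℝ, f u u = 0) →
      (∀ u w v : ℝ, v ≤ w → w ≤ u → f u w + f w v ≤ f u v) →
      (∀ u w v : ℝ, v ≤ w → w ≤ u → f u v - f w v ≤ α * (u - w) + η u) →
      (∀ u : ℝ, z ≤ u → f u z - η u ≤ g u ∧ g u ≤ f u z) →
      ∀ u v : ℝ, v ≤ u → f u v - η u ≤ hFun α g z u v) := by
  constructor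
  · refine ⟨?_, ?_, ?_, ?_⟩
    · intro u v huv
      unfold hFun
      split_ifs with h
      · linarith [hgmono huv]
      · nlinarith
    · intro u
      unfold hFun
      split_ifs with h <;> ring
    · intro u w v hvw hwu
      unfold hFun
      split_ifs with h1 h2 h3
      · linarith
      · have := hglip u w
        rw [abs_of_nonneg (by linarith [hgmono hwu] : (0:ℝ) ≤ g u - g w),
          abs_of_nonneg (by linarith : (0:ℝ) ≤ u - w)] at this
        linarith
      · linarith
      · linarith
    · intro v u₁ u₂ h1 h2
      unfold hFun
      split_ifs with h
      · have := hglip u₁ u₂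
        calc |g u₁ - g v - (g u₂ - g v)| = |g u₁ - g u₂| := by ring_nf
          _ ≤ α * |u₁ - u₂| := this
      · have e : α * (u₁ - v) - α * (u₂ - v) = α * (u₁ - u₂) := by ring
        rw [e, abs_mul, abs_of_nonneg hα]
  · intro f η hη hf0 hdiag hsup hlip hagree u v huv
    unfold hFun
    split_ifs with h
    · -- z ≤ v ≤ u
      have hzu : z ≤ u := le_trans h huv
      have h1 := hsup u v z h huv
      have h2 := (hagree u hzu).1
      have h3 := (hagree v h).2
      linarith
    · -- v < z : use approximate Lipschitz with w = v
      have := hlip u v v le_rfl huv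
      rw [hdiag v] at this
      linarith

end
end

section
/- Let α ≥ 0 and let f : Δ → [0,∞) satisfy f(u,u) = 0 for all u and f(u,v) ≥ f(u,w) + f(w,v) for all v ≤ w ≤ u. Suppose η : ℝ → [0,∞) is such that f(u,v) − f(w,v) ≤ α(u−w) + η(u) for all v ≤ w ≤ u. Then there exists a function g ∈ L(α) such that f(u,v) − η(u) ≤ g(u,v) ≤ f(u,v) for all (u,v) ∈ Δ. -/
open Metric Set Filter
open scoped ENNReal NNReal

noncomputable section

/-- Any approximately `α`-Lipschitz superadditive function on `Δ` can be
replaced by a genuine element of `L(α)`, up to the error `η`. -/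
theorem replace_by_MemL (α : ℝ) (hα : 0 ≤ α) (f : ℝ → ℝ → ℝ) (η : ℝ → ℝ)
    (hη : ∀ u : ℝ, 0 ≤ η u)
    (hf0 : ∀ u v : ℝ, v ≤ u → 0 ≤ f u v) (hfd : ∀ u : ℝ, f u u = 0)
    (hfs : ∀ u w v : ℝ, v ≤ w → w ≤ u → f u w + f w v ≤ f u v)
    (hflip : ∀ u w v : ℝ, v ≤ w → w ≤ u → f u v - f w v ≤ α * (u - w) + η u) :
    ∃ g : ℝ → ℝ → ℝ, MemL α g ∧
      ∀ u v : ℝ, v ≤ u → f u v - η u ≤ g u v ∧ g u v ≤ f u v := by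

  classical
  set S : ℝ → ℝ → Set ℝ := fun u v => (fun w => f w v + α * (u - w)) '' Set.Icc v u with hS
  have hbdd : ∀ u v : ℝ, BddBelow (S u v) := by
    intro u v
    refine ⟨0, ?_⟩
    rintro x ⟨w, hw, rfl⟩
    have h1 : 0 ≤ f w v := hf0 w v hw.1
    have h2 : 0 ≤ α * (u - w) := mul_nonneg hα (by linarith [hw.2])
    show (0:ℝ) ≤ f w v + α * (u - w)
    linarith
  have hne : ∀ u v : ℝ, v ≤ u → (S u v).Nonempty := by
    intro u v huv
    exact ⟨f u v + α * (u - u), u, ⟨huv, le_refl u⟩, rfl⟩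
  set g : ℝ → ℝ → ℝ := fun u v => sInf (S u v) with hg
  have g_le : ∀ u v w : ℝ, v ≤ w → w ≤ u → g u v ≤ f w v + α * (u - w) := by
    intro u v w h1 h2
    exact csInf_le (hbdd u v) ⟨w, ⟨h1, h2⟩, rfl⟩
  have le_g : ∀ u v c : ℝ, v ≤ u → (∀ w : ℝ, v ≤ w → w ≤ u → c ≤ f w v + α * (u - w)) →
      c ≤ g u v := by
    intro u v c huv h
    refine le_csInf (hne u v huv) ?_
    rintro x ⟨w, hw, rfl⟩
    exact h w hw.1 hw.2
  have g_nonneg : ∀ u v : ℝ, v ≤ u → 0 ≤ g u v := by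
    intro u v huv
    refine le_g u v 0 huv fun w h1 h2 => ?_
    have := hf0 w v h1
    have : 0 ≤ α * (u - w) := mul_nonneg hα (by linarith)
    linarith [hf0 w v h1]
  have g_mono : ∀ a b v : ℝ, v ≤ a → a ≤ b → g a v ≤ g b v := by
    intro a b v hva hab
    refine le_g b v (g a v) (hva.trans hab) fun w h1 h2 => ?_
    rcases le_total w a with hwa | haw
    · have := g_le a v w h1 hwa
      have h3 : α * (a - w) ≤ α * (b - w) := by
        apply mul_le_mul_of_nonneg_left _ hα; linarith
      linarith
    · have h3 : g a v ≤ f a v + α * (a - a) := g_le a v a hva le_rfl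
      have h4 : f w a + f a v ≤ f w v := hfs w a v hva haw
      have h5 : 0 ≤ f w a := hf0 w a haw
      have h6 : 0 ≤ α * (b - w) := mul_nonneg hα (by linarith)
      linarith
  have g_lip : ∀ a b v : ℝ, v ≤ a → a ≤ b → g b v ≤ g a v + α * (b - a) := by
    intro a b v hva hab
    have : g b v - α * (b - a) ≤ g a v := by
      refine le_g a v _ hva fun w h1 h2 => ?_
      have := g_le b v w h1 (h2.trans hab)
      have heq : α * (b - w) = α * (a - w) + α * (b - a) := by ring
      linarith
    linarith
  refine ⟨g, ⟨g_nonneg, ?_, ?_, ?_⟩, ?_⟩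
  · -- diagonal
    intro u
    refine le_antisymm ?_ (g_nonneg u u le_rfl)
    have := g_le u u u le_rfl le_rfl
    rw [hfd u] at this
    linarith
  · -- superadditive
    intro u w v hvw hwu
    refine le_g u v _ (hvw.trans hwu) fun s h1 h2 => ?_
    rcases le_total s w with hsw | hws
    · have ha : g w v ≤ f s v + α * (w - s) := g_le w v s h1 hsw
      have hb : g u w ≤ f w w + α * (u - w) := g_le u w w le_rfl hwu
      rw [hfd w] at hb
      have : α * (w - s) + α * (u - w) = α * (u - s) := by ring
      linarith
    · have ha : g u w ≤ f s w + α * (u - s) := g_le u w s hws h2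
      have hb : g w v ≤ f w v + α * (w - w) := g_le w v w hvw le_rfl
      have hc : f s w + f w v ≤ f s v := hfs s w v hvw hws
      linarith
  · -- Lipschitz
    intro v u₁ u₂ h1 h2
    rw [abs_le]
    rcases le_total u₁ u₂ with h | h
    · have habs : |u₁ - u₂| = u₂ - u₁ := by rw [abs_of_nonpos (by linarith)]; ring
      have hm := g_mono u₁ u₂ v h1 h
      have hl := g_lip u₁ u₂ v h1 h
      constructor <;> [skip; skip] <;> rw [habs] <;> nlinarith [mul_nonneg hα (sub_nonneg.2 h)]
    · have habs : |u₁ - u₂| = u₁ - u₂ := abs_of_nonneg (by linarith)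
      have hm := g_mono u₂ u₁ v h2 h
      have hl := g_lip u₂ u₁ v h2 h
      constructor <;> rw [habs] <;> nlinarith [mul_nonneg hα (sub_nonneg.2 h)]
  · -- sandwich
    intro u v huv
    constructor
    · refine le_g u v _ huv fun w h1 h2 => ?_
      have := hflip u w v h1 h2
      linarith
    · have := g_le u v u huv le_rfl
      simpa using this


end
end

section
/- Let α ≥ 0. Then Λ(L(α)) = H(α); that is: (a) for every f ∈ L(α), the function Λ(f) : (0,1] → [0,α] belongs to H(α); and (b) for every φ ∈ H(α) there exists f ∈ L(α) such that Λ(f) = φ. -/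
open Metric Set Filter
open scoped ENNReal NNReal

noncomputable section

/-!
For `f ∈ L(α)` and `0 < λθ ≤ θ ≤ 1`, superadditivity at `λθu ≤ θu ≤ u` and the Lipschitz bound
in the first variable give
`f(u,θu) + f(θu,λθu) ≤ f(u,λθu) ≤ α(1-θ)u + f(θu,λθu)`.
Since `f(θu,λθu)/u = θ · f(θu,λ·θu)/(θu)` has liminf `θ Λ(f)(λ)`, dividing by `u` and passing
to the liminf gives (S) and (W). Conversely, for `φ ∈ H(α)` the homogeneous function
`u φ(v/u)` (continued by `α(u-v)` for `v ≤ 0`) lies in `L(α)`, because (S) and (W) rescaled by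
`u` are exactly its superadditivity and Lipschitz bound; its `Λ` is `φ` itself.
-/

section EventuallyBounded

variable {ι : Type*} {l : Filter ι} {g : ι → ℝ} {a b : ℝ}

theorem isBoundedUnder_ge_of_eventually_mem_Icc (h : ∀ᶠ i in l, g i ∈ Icc a b) :
    IsBoundedUnder (· ≥ ·) l g :=
  isBoundedUnder_of_eventually_ge (h.mono fun _ hi => hi.1)

theorem isCoboundedUnder_ge_of_eventually_mem_Icc [l.NeBot] (h : ∀ᶠ i in l, g i ∈ Icc a b) :
    IsCoboundedUnder (· ≥ ·) l g :=
  isCoboundedUnder_ge_of_eventually_le l (h.mono fun _ hi => hi.2)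

theorem liminf_mem_Icc_of_eventually [l.NeBot] (h : ∀ᶠ i in l, g i ∈ Icc a b) :
    liminf g l ∈ Icc a b :=
  ⟨le_liminf_of_le (isCoboundedUnder_ge_of_eventually_mem_Icc h) (h.mono fun _ hi => hi.1),
    liminf_le_of_frequently_le (h.mono fun _ hi => hi.2).frequently
      (isBoundedUnder_ge_of_eventually_mem_Icc h)⟩

end EventuallyBounded

theorem liminf_const_mul_comp_const_mul {g : ℝ → ℝ} {θ a b : ℝ} (hθ : 0 < θ)
    (hg : ∀ᶠ u in atTop, g u ∈ Icc a b) :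
    liminf (fun u => θ * g (θ * u)) atTop = θ * liminf g atTop := by
  have hmap : map (θ * ·) atTop = atTop := (OrderIso.mulLeft₀ θ hθ).map_atTop
  have hmono : Monotone (θ * ·) := fun _ _ h => mul_le_mul_of_nonneg_left h hθ.le
  calc liminf (fun u => θ * g (θ * u)) atTop = liminf (θ * g ·) (map (θ * ·) atTop) := rfl
    _ = liminf (θ * g ·) atTop := by rw [hmap]
    _ = θ * liminf g atTop :=
      (hmono.map_liminf_of_continuousAt g (continuous_const_mul θ).continuousAt
        (isCoboundedUnder_ge_of_eventually_mem_Icc hg)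
        (isBoundedUnder_ge_of_eventually_mem_Icc hg)).symm

theorem mul_mul_le_of_le_one_left {lam θ u : ℝ} (hθu : 0 ≤ θ * u) (hlam1 : lam ≤ 1) :
    lam * θ * u ≤ θ * u := by
  rw [mul_assoc]; exact mul_le_of_le_one_left hθu hlam1

namespace MemL

variable {α : ℝ} {f : ℝ → ℝ → ℝ}

theorem of_le_add_mul_sub (hnonneg : ∀ u v, v ≤ u → 0 ≤ f u v)
    (hdiag : ∀ u, f u u = 0) (hsuper : ∀ u w v, v ≤ w → w ≤ u → f u w + f w v ≤ f u v)
    (hlip : ∀ u w v, v ≤ w → w ≤ u → f u v ≤ f w v + α * (u - w)) :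
    MemL α f := by
  refine ⟨hnonneg, hdiag, hsuper, fun v u₁ u₂ h₁ h₂ => ?_⟩
  have key : ∀ a b, v ≤ a → a ≤ b → |f a v - f b v| ≤ α * |a - b| := by
    intro a b hva hab
    have hmono : f a v ≤ f b v := by linarith [hsuper b a v hva hab, hnonneg b a hab]
    rw [abs_sub_comm, abs_of_nonneg (sub_nonneg.2 hmono), abs_sub_comm,
      abs_of_nonneg (sub_nonneg.2 hab)]
    linarith [hlip b a v hva hab]
  rcases le_total u₁ u₂ with h | h
  · exact key _ _ h₁ h
  · rw [abs_sub_comm, abs_sub_comm u₁]; exact key _ _ h₂ h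

theorem le_add_mul_sub (hf : MemL α f) {u w v : ℝ} (hvw : v ≤ w) (hwu : w ≤ u) :
    f u v ≤ f w v + α * (u - w) := by
  have h := (abs_le.1 (hf.2.2.2 v u w (hvw.trans hwu) hvw)).2
  rw [abs_of_nonneg (sub_nonneg.2 hwu)] at h
  linarith

theorem le_mul_sub (hf : MemL α f) {u v : ℝ} (hvu : v ≤ u) : f u v ≤ α * (u - v) := by
  simpa [hf.2.1] using hf.le_add_mul_sub le_rfl hvu

theorem alpha_nonneg (hf : MemL α f) : 0 ≤ α := by
  simpa using (hf.1 1 0 zero_le_one).trans (hf.le_mul_sub zero_le_one)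

theorem div_mem_Icc (hf : MemL α f) {θ u : ℝ} (hθ0 : 0 ≤ θ) (hθ1 : θ ≤ 1) (hu : 0 < u) :
    f u (θ * u) / u ∈ Icc 0 α := by
  have hθu : θ * u ≤ u := mul_le_of_le_one_left hu.le hθ1
  refine ⟨div_nonneg (hf.1 _ _ hθu) hu.le, (div_le_iff₀ hu).2 ?_⟩
  nlinarith [hf.le_mul_sub hθu, hf.alpha_nonneg, mul_nonneg hθ0 hu.le]

theorem eventually_div_mem_Icc (hf : MemL α f) {θ : ℝ} (hθ0 : 0 ≤ θ) (hθ1 : θ ≤ 1) :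
    ∀ᶠ u in atTop, f u (θ * u) / u ∈ Icc 0 α :=
  (eventually_gt_atTop 0).mono fun _ hu => hf.div_mem_Icc hθ0 hθ1 hu

theorem lam_mem_Icc (hf : MemL α f) {θ : ℝ} (hθ0 : 0 ≤ θ) (hθ1 : θ ≤ 1) :
    Lam f θ ∈ Icc 0 α :=
  liminf_mem_Icc_of_eventually (hf.eventually_div_mem_Icc hθ0 hθ1)

theorem eventually_rescaled_mem_Icc (hf : MemL α f) {lam θ : ℝ} (hlam0 : 0 ≤ lam)
    (hlam1 : lam ≤ 1) (hθ0 : 0 ≤ θ) :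
    ∀ᶠ u in atTop, f (θ * u) (lam * θ * u) / u ∈ Icc 0 (α * θ) := by
  filter_upwards [eventually_gt_atTop 0] with u hu
  have hle : lam * θ * u ≤ θ * u := mul_mul_le_of_le_one_left (by positivity) hlam1
  refine ⟨div_nonneg (hf.1 _ _ hle) hu.le, (div_le_iff₀ hu).2 ?_⟩
  nlinarith [hf.le_mul_sub hle, hf.alpha_nonneg, mul_nonneg (mul_nonneg hlam0 hθ0) hu.le]

theorem liminf_rescaled (hf : MemL α f) {lam θ : ℝ} (hlam0 : 0 ≤ lam) (hlam1 : lam ≤ 1)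
    (hθ : 0 < θ) :
    liminf (fun u => f (θ * u) (lam * θ * u) / u) atTop = θ * Lam f lam := by
  have hrw : (fun u => f (θ * u) (lam * θ * u) / u) =
      fun u => θ * (f (θ * u) (lam * (θ * u)) / (θ * u)) := by
    funext u
    rw [← mul_div_assoc, mul_div_mul_left _ _ hθ.ne', mul_assoc]
  rw [hrw]
  exact liminf_const_mul_comp_const_mul hθ (hf.eventually_div_mem_Icc hlam0 hlam1)

theorem lam_add_mul_lam_le (hf : MemL α f) {lam θ : ℝ} (hlam0 : 0 ≤ lam) (hlam1 : lam ≤ 1)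
    (hθ0 : 0 < θ) (hθ1 : θ ≤ 1) :
    Lam f θ + θ * Lam f lam ≤ Lam f (lam * θ) := by
  have hq := hf.eventually_div_mem_Icc hθ0.le hθ1
  have hr := hf.eventually_rescaled_mem_Icc hlam0 hlam1 hθ0.le
  have hsuper : ∀ᶠ u in atTop,
      f u (θ * u) / u + f (θ * u) (lam * θ * u) / u ≤ f u (lam * θ * u) / u := by
    filter_upwards [eventually_gt_atTop 0] with u hu
    rw [← add_div, div_le_div_iff_of_pos_right hu]
    exact hf.2.2.1 _ _ _ (mul_mul_le_of_le_one_left (by positivity) hlam1)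
      (mul_le_of_le_one_left hu.le hθ1)
  calc Lam f θ + θ * Lam f lam
      = liminf (fun u => f u (θ * u) / u) atTop +
          liminf (fun u => f (θ * u) (lam * θ * u) / u) atTop := by
        rw [hf.liminf_rescaled hlam0 hlam1 hθ0]; rfl
    _ ≤ liminf ((fun u => f u (θ * u) / u) + fun u => f (θ * u) (lam * θ * u) / u) atTop :=
        le_liminf_add (isBoundedUnder_ge_of_eventually_mem_Icc hq)
          (isBoundedUnder_of_eventually_le (hq.mono fun _ h => h.2))
          (isBoundedUnder_ge_of_eventually_mem_Icc hr)
          (isCoboundedUnder_ge_of_eventually_mem_Icc hr)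
    _ ≤ Lam f (lam * θ) := by
        refine liminf_le_liminf hsuper ?_
          (isCoboundedUnder_ge_of_eventually_mem_Icc
            (hf.eventually_div_mem_Icc (by positivity) (mul_le_one₀ hlam1 hθ0.le hθ1)))
        exact isBoundedUnder_ge_add (isBoundedUnder_ge_of_eventually_mem_Icc hq)
          (isBoundedUnder_ge_of_eventually_mem_Icc hr)

theorem lam_le_add_mul_lam (hf : MemL α f) {lam θ : ℝ} (hlam0 : 0 ≤ lam) (hlam1 : lam ≤ 1)
    (hθ0 : 0 < θ) (hθ1 : θ ≤ 1) :
    Lam f (lam * θ) ≤ (1 - θ) * α + θ * Lam f lam := by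
  have hr := hf.eventually_rescaled_mem_Icc hlam0 hlam1 hθ0.le
  have hlip : ∀ᶠ u in atTop,
      f u (lam * θ * u) / u ≤ (1 - θ) * α + f (θ * u) (lam * θ * u) / u := by
    filter_upwards [eventually_gt_atTop 0] with u hu
    rw [div_le_iff₀ hu, add_mul, div_mul_cancel₀ _ hu.ne']
    have := hf.le_add_mul_sub (mul_mul_le_of_le_one_left (by positivity) hlam1)
      (mul_le_of_le_one_left hu.le hθ1)
    linarith
  calc Lam f (lam * θ)
      ≤ liminf (fun u => (1 - θ) * α + f (θ * u) (lam * θ * u) / u) atTop :=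
        liminf_le_liminf hlip
          (isBoundedUnder_ge_of_eventually_mem_Icc
            (hf.eventually_div_mem_Icc (by positivity) (mul_le_one₀ hlam1 hθ0.le hθ1)))
          (isCoboundedUnder_ge_of_eventually_le atTop (x := (1 - θ) * α + α * θ)
            (hr.mono fun _ h => add_le_add_right h.2 _))
    _ = (1 - θ) * α + θ * Lam f lam := by
        rw [liminf_const_add _ _ _ (isCoboundedUnder_ge_of_eventually_mem_Icc hr)
          (isBoundedUnder_ge_of_eventually_mem_Icc hr), hf.liminf_rescaled hlam0 hlam1 hθ0]

theorem memH_lam (hf : MemL α f) : MemH α (Lam f) :=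
  ⟨fun _ hθ0 hθ1 => hf.lam_mem_Icc hθ0.le hθ1,
    fun _ _ hlam0 hlam1 hθ0 hθ1 => hf.lam_add_mul_lam_le hlam0.le hlam1 hθ0 hθ1,
    fun _ _ hlam0 hlam1 hθ0 hθ1 => hf.lam_le_add_mul_lam hlam0.le hlam1 hθ0 hθ1⟩

end MemL

def homogeneousExtension (α : ℝ) (φ : ℝ → ℝ) (u v : ℝ) : ℝ :=
  if 0 < v then u * φ (v / u) else α * (u - v)

namespace MemH

variable {α : ℝ} {φ : ℝ → ℝ}

theorem apply_one (hφ : MemH α φ) : φ 1 = 0 := by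
  have h := hφ.2.1 1 1 one_pos le_rfl one_pos le_rfl
  simp only [one_mul, mul_one] at h
  linarith [(hφ.1 1 one_pos le_rfl).1]

theorem alpha_nonneg (hφ : MemH α φ) : 0 ≤ α :=
  (hφ.1 1 one_pos le_rfl).1.trans (hφ.1 1 one_pos le_rfl).2

/-- (S) at `λ = v / w`, `θ = w / u`, multiplied by `u`. -/
theorem mul_add_mul_le {u w v : ℝ} (hφ : MemH α φ) (hv : 0 < v) (hvw : v ≤ w) (hwu : w ≤ u) :
    u * φ (w / u) + w * φ (v / w) ≤ u * φ (v / u) := by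
  have hw : 0 < w := hv.trans_le hvw
  have hu : 0 < u := hw.trans_le hwu
  have h := hφ.2.1 (v / w) (w / u) (div_pos hv hw) ((div_le_one hw).2 hvw) (div_pos hw hu)
    ((div_le_one hu).2 hwu)
  rw [div_mul_div_cancel₀ hw.ne'] at h
  have h' := mul_le_mul_of_nonneg_left h hu.le
  rwa [mul_add, ← mul_assoc, mul_div_cancel₀ _ hu.ne'] at h'

/-- (W) at `λ = v / w`, `θ = w / u`, multiplied by `u`. -/
theorem mul_le_mul_add_mul_sub {u w v : ℝ} (hφ : MemH α φ) (hv : 0 < v) (hvw : v ≤ w)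
    (hwu : w ≤ u) :
    u * φ (v / u) ≤ w * φ (v / w) + α * (u - w) := by
  have hw : 0 < w := hv.trans_le hvw
  have hu : 0 < u := hw.trans_le hwu
  have h := hφ.2.2 (v / w) (w / u) (div_pos hv hw) ((div_le_one hw).2 hvw) (div_pos hw hu)
    ((div_le_one hu).2 hwu)
  rw [div_mul_div_cancel₀ hw.ne'] at h
  have h' := mul_le_mul_of_nonneg_left h hu.le
  rw [mul_add, ← mul_assoc, ← mul_assoc, mul_div_cancel₀ _ hu.ne', mul_sub, mul_one,
    mul_div_cancel₀ _ hu.ne'] at h'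
  linarith

theorem memL_homogeneousExtension (hφ : MemH α φ) : MemL α (homogeneousExtension α φ) := by
  have hα := hφ.alpha_nonneg
  refine MemL.of_le_add_mul_sub (fun u v hvu => ?_) (fun u => ?_) (fun u w v hvw hwu => ?_)
    (fun u w v hvw hwu => ?_) <;> unfold homogeneousExtension
  · split_ifs with hv
    · have hu := hv.trans_le hvu
      exact mul_nonneg hu.le (hφ.1 _ (div_pos hv hu) ((div_le_one hu).2 hvu)).1
    · exact mul_nonneg hα (sub_nonneg.2 hvu)
  · split_ifs with hu
    · rw [div_self hu.ne', hφ.apply_one, mul_zero]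
    · rw [sub_self, mul_zero]
  · by_cases hv : 0 < v
    · have hw := hv.trans_le hvw
      rw [if_pos hw, if_pos hv, if_pos hv]
      exact hφ.mul_add_mul_le hv hvw hwu
    by_cases hw : 0 < w
    · rw [if_pos hw, if_neg hv, if_neg hv]
      have h := hφ.mul_le_mul_add_mul_sub hw le_rfl hwu
      rw [div_self hw.ne', hφ.apply_one] at h
      linarith
    · rw [if_neg hw, if_neg hv, if_neg hv]
      linarith
  · split_ifs with hv
    · exact hφ.mul_le_mul_add_mul_sub hv hvw hwu
    · linarith

end MemH

theorem lam_homogeneousExtension (α : ℝ) (φ : ℝ → ℝ) {θ : ℝ} (hθ : 0 < θ) :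
    Lam (homogeneousExtension α φ) θ = φ θ := by
  have h : ∀ᶠ u in atTop, homogeneousExtension α φ u (θ * u) / u = φ θ := by
    filter_upwards [eventually_gt_atTop 0] with u hu
    rw [homogeneousExtension, if_pos (mul_pos hθ hu), mul_div_cancel_right₀ _ hu.ne',
      mul_div_cancel_left₀ _ hu.ne']
  exact (liminf_congr h).trans (liminf_const _)

theorem Lam_image_of_L_general (α : ℝ) :
    (∀ f : ℝ → ℝ → ℝ, MemL α f → MemH α (Lam f)) ∧
    (∀ φ : ℝ → ℝ, MemH α φ →
      ∃ f : ℝ → ℝ → ℝ, MemL α f ∧ ∀ θ : ℝ, 0 < θ → θ ≤ 1 → Lam f θ = φ θ) :=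
  ⟨fun _ hf => hf.memH_lam,
    fun _ hφ => ⟨homogeneousExtension α _, hφ.memL_homogeneousExtension,
      fun _ hθ _ => lam_homogeneousExtension α _ hθ⟩⟩

/-- `Λ(L(α)) = H(α)`. -/
theorem Lam_image_of_L (α : ℝ) (hα : 0 ≤ α) :
    (∀ f : ℝ → ℝ → ℝ, MemL α f → MemH α (Lam f)) ∧
    (∀ φ : ℝ → ℝ, MemH α φ →
      ∃ f : ℝ → ℝ → ℝ, MemL α f ∧ ∀ θ : ℝ, 0 < θ → θ ≤ 1 → Lam f θ = φ θ) :=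
  Lam_image_of_L_general α

end
end

section
/- Let α ≥ 0 and φ ∈ H(α). Then for every λ ∈ (0,1], the function φ is (α − φ(λ))/λ-Lipschitz on the interval [λ, 1]. In particular, φ is continuous on (0,1]. -/
open Metric Set Filter
open scoped ENNReal NNReal

noncomputable section

/-- Functions in `H(α)` are Lipschitz on `[λ,1]` with constant
`(α - φ(λ))/λ`, and in particular continuous on `(0,1]`. -/
theorem MemH_lipschitzOn (α : ℝ) (hα : 0 ≤ α) (φ : ℝ → ℝ) (hφ : MemH α φ) :
    (∀ lam : ℝ, 0 < lam → lam ≤ 1 →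
      ∀ θ₁ θ₂ : ℝ, lam ≤ θ₁ → θ₁ ≤ 1 → lam ≤ θ₂ → θ₂ ≤ 1 →
        |φ θ₁ - φ θ₂| ≤ ((α - φ lam) / lam) * |θ₁ - θ₂|) ∧
    ContinuousOn φ (Set.Ioc (0 : ℝ) 1) := by
  obtain ⟨hbd, hS, hW⟩ := hφ
  have mono : ∀ a b : ℝ, 0 < a → a ≤ b → b ≤ 1 → φ b ≤ φ a := by
    intro a b ha hab hb1
    have hb : 0 < b := lt_of_lt_of_le ha hab
    have ht1 : 0 < a / b := div_pos ha hb
    have ht2 : a / b ≤ 1 := (div_le_one hb).mpr hab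
    have hh := hS (a / b) b ht1 ht2 hb hb1
    rw [show a / b * b = a by field_simp] at hh
    have hpos := (hbd (a / b) ht1 ht2).1
    nlinarith
  have lip1 : ∀ lam θ₁ θ₂ : ℝ, 0 < lam → lam ≤ θ₁ → θ₁ ≤ θ₂ → θ₂ ≤ 1 →
      φ θ₁ - φ θ₂ ≤ ((α - φ lam) / lam) * (θ₂ - θ₁) := by
    intro lam θ₁ θ₂ hl h1 h12 h21
    have hθ₁ : 0 < θ₁ := lt_of_lt_of_le hl h1
    have hθ₂ : 0 < θ₂ := lt_of_lt_of_le hθ₁ h12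
    have ht : 0 < θ₁ / θ₂ := div_pos hθ₁ hθ₂
    have ht1 : θ₁ / θ₂ ≤ 1 := (div_le_one hθ₂).mpr h12
    have hs : 0 < lam / θ₂ := div_pos hl hθ₂
    have hs1 : lam / θ₂ ≤ 1 := (div_le_one hθ₂).mpr (h1.trans h12)
    have hA := hW θ₂ (θ₁ / θ₂) hθ₂ h21 ht ht1
    rw [show θ₂ * (θ₁ / θ₂) = θ₁ by field_simp] at hA
    have hB := hW θ₂ (lam / θ₂) hθ₂ h21 hs hs1
    rw [show θ₂ * (lam / θ₂) = lam by field_simp] at hB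
    have hφ2 := (hbd θ₂ hθ₂ h21).2
    have hA' : θ₂ * φ θ₁ ≤ (θ₂ - θ₁) * α + θ₁ * φ θ₂ := by
      have := mul_le_mul_of_nonneg_right hA hθ₂.le
      have e1 : θ₁ / θ₂ * θ₂ = θ₁ := by field_simp
      nlinarith [this]
    have hB' : θ₂ * φ lam ≤ (θ₂ - lam) * α + lam * φ θ₂ := by
      have := mul_le_mul_of_nonneg_right hB hθ₂.le
      have e1 : lam / θ₂ * θ₂ = lam := by field_simp
      nlinarith [this]
    rw [div_mul_eq_mul_div, le_div_iff₀ hl]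
    -- (φ θ₁ - φ θ₂) * lam ≤ (α - φ lam) * (θ₂ - θ₁)
    nlinarith [mul_le_mul_of_nonneg_left hA' hl.le,
      mul_le_mul_of_nonneg_right hB' (by linarith : (0:ℝ) ≤ θ₂ - θ₁),
      mul_nonneg (sub_nonneg.mpr h12) (sub_nonneg.mpr hφ2)]
  have key : ∀ lam : ℝ, 0 < lam → lam ≤ 1 →
      ∀ θ₁ θ₂ : ℝ, lam ≤ θ₁ → θ₁ ≤ 1 → lam ≤ θ₂ → θ₂ ≤ 1 →
        |φ θ₁ - φ θ₂| ≤ ((α - φ lam) / lam) * |θ₁ - θ₂| := by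
    intro lam hl hl1 θ₁ θ₂ h1 h11 h2 h21
    rcases le_total θ₁ θ₂ with h | h
    · have hm := mono θ₁ θ₂ (lt_of_lt_of_le hl h1) h h21
      rw [abs_of_nonneg (by linarith), abs_of_nonpos (by linarith)]
      have := lip1 lam θ₁ θ₂ hl h1 h h21
      linarith
    · have hm := mono θ₂ θ₁ (lt_of_lt_of_le hl h2) h h11
      rw [abs_of_nonpos (by linarith), abs_of_nonneg (by linarith)]
      have := lip1 lam θ₂ θ₁ hl h2 h h11
      linarith
  refine ⟨key, ?_⟩
  intro x hx
  obtain ⟨hx0, hx1⟩ := hx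
  have hx2 : 0 < x / 2 := by linarith
  set K := (α - φ (x / 2)) / (x / 2) with hKdef
  have hφhalf := (hbd (x / 2) hx2 (by linarith)).2
  have hK : 0 ≤ K := div_nonneg (by linarith) hx2.le
  rw [Metric.continuousWithinAt_iff]
  intro ε hε
  refine ⟨min (x / 2) (ε / (K + 1)), lt_min hx2 (div_pos hε (by linarith)), ?_⟩
  intro y hy hdist
  rw [Real.dist_eq] at hdist ⊢
  have h1 : |y - x| < x / 2 := lt_of_lt_of_le hdist (min_le_left _ _)
  have h2 : |y - x| < ε / (K + 1) := lt_of_lt_of_le hdist (min_le_right _ _)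
  have habs := abs_lt.mp h1
  have hy2 : x / 2 ≤ y := by linarith [habs.1]
  have hb := key (x / 2) hx2 (by linarith) y x hy2 hy.2 (by linarith) hx1
  have hd : |y - x| * (K + 1) < ε := by
    rw [← lt_div_iff₀ (by linarith : (0:ℝ) < K + 1)]; exact h2
  calc |φ y - φ x| ≤ K * |y - x| := hb
    _ ≤ (K + 1) * |y - x| := by nlinarith [abs_nonneg (y - x)]
    _ < ε := by linarith [hd, mul_comm (|y - x|) (K + 1)]

end
end

section
/- Let α ≥ 0. Then: (a) φ_{α,λ,t} ∈ M(α) for all λ ∈ (0,1] and 0 ≤ t ≤ α(1−λ); and (b) if φ : (0,1] → [0,α] satisfies φ(λ) ≤ α(1−λ) for all λ ∈ (0,1], then φ ∈ M(α) if and only if φ(θ) ≤ φ_{α,λ,φ(λ)}(θ) for all λ, θ ∈ (0,1]. -/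
open Metric Set Filter
open scoped ENNReal NNReal

noncomputable section

/-- The functions `φ_{α,λ,t}` lie in `M(α)`, and they characterize `M(α)`
by pointwise domination. -/
theorem phiFun_mem_M_and_characterizes (α : ℝ) (hα : 0 ≤ α) :
    (∀ lam t : ℝ, 0 < lam → lam ≤ 1 → 0 ≤ t → t ≤ α * (1 - lam) →
      MemM α (phiFun α lam t)) ∧
    (∀ φ : ℝ → ℝ, (∀ θ : ℝ, 0 < θ → θ ≤ 1 → 0 ≤ φ θ ∧ φ θ ≤ α) →
      (∀ lam : ℝ, 0 < lam → lam ≤ 1 → φ lam ≤ α * (1 - lam)) →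
      (MemM α φ ↔ ∀ lam θ : ℝ, 0 < lam → lam ≤ 1 → 0 < θ → θ ≤ 1 →
        φ θ ≤ phiFun α lam (φ lam) θ)) := by
  constructor
  · -- part (a)
    intro lam t hlam hlam1 ht ht'
    have hlam0 : lam ≠ 0 := ne_of_gt hlam
    have htα : t ≤ α := by nlinarith
    refine ⟨?_, ?_, ?_⟩
    · -- bounds
      intro θ hθ hθ1
      unfold phiFun
      split_ifs with h
      · have h1 : θ / lam ≤ 1 := (div_le_one hlam).mpr h
        have h2 : 0 ≤ θ / lam := by positivity
        constructor <;> nlinarith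
      · have hl1 : lam < 1 := lt_of_lt_of_le (not_le.mp h) hθ1
        have hpos : (0:ℝ) < 1 - lam := by linarith
        constructor
        · exact div_nonneg (mul_nonneg ht (by linarith)) hpos.le
        · rw [div_le_iff₀ hpos]; nlinarith
    · -- (W)
      intro μ s hμ hμ1 hs hs1
      unfold phiFun
      have hμs : μ * s ≤ μ := by nlinarith
      split_ifs with h1 h2 h3
      · -- both first branch: equality
        have e : α + μ * s / lam * (t - α) = (1 - s) * α + s * (α + μ / lam * (t - α)) := by
          field_simp; ring
        rw [e]
      · -- μ*s ≤ lam < μ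
        have hμl : lam < μ := not_le.mp h2
        have hl1 : lam < 1 := lt_of_lt_of_le hμl hμ1
        have hpos : (0:ℝ) < 1 - lam := by linarith
        rw [← sub_nonneg]
        have e : (1 - s) * α + s * (t * (1 - μ) / (1 - lam)) - (α + μ * s / lam * (t - α))
            = s * (μ - lam) * (α * (1 - lam) - t) / (lam * (1 - lam)) := by
          field_simp; ring
        rw [e]
        exact div_nonneg (mul_nonneg (mul_nonneg hs.le (by linarith)) (by linarith))
          (by positivity)
      · -- ¬(μ*s ≤ lam) but μ ≤ lam : contradiction
        exact absurd (le_trans hμs h3) h1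
      · -- both second branch
        have hμl : lam < μ * s := not_le.mp h1
        have hl1 : lam < 1 := by nlinarith
        have hpos : (0:ℝ) < 1 - lam := by linarith
        rw [← sub_nonneg]
        have e : (1 - s) * α + s * (t * (1 - μ) / (1 - lam)) - t * (1 - μ * s) / (1 - lam)
            = (1 - s) * (α * (1 - lam) - t) / (1 - lam) := by
          field_simp; ring
        rw [e]
        exact div_nonneg (by nlinarith) (by positivity)
    · -- (M)
      intro θ₁ θ₂ h₁ h12 h2
      unfold phiFun
      have hp1 : (0:ℝ) < 1 - θ₁ := by linarith
      have hp2 : (0:ℝ) < 1 - θ₂ := by linarith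
      split_ifs with ha hb hc
      · -- both ≤ lam
        rw [← sub_nonneg]
        have e : (α + θ₁ / lam * (t - α)) / (1 - θ₁) - (α + θ₂ / lam * (t - α)) / (1 - θ₂)
            = (θ₂ - θ₁) * (α * (1 - lam) - t) / (lam * (1 - θ₁) * (1 - θ₂)) := by
          field_simp; ring
        rw [e]
        exact div_nonneg (by nlinarith) (by positivity)
      · -- θ₂ ≤ lam, lam < θ₁ : impossible
        exact absurd (le_trans h12 ha) hb
      · -- θ₁ ≤ lam < θ₂
        have hμl : lam < θ₂ := not_le.mp ha
        have hl1 : lam < 1 := by linarith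
        have hpos : (0:ℝ) < 1 - lam := by linarith
        rw [← sub_nonneg]
        have e : (α + θ₁ / lam * (t - α)) / (1 - θ₁) - t * (1 - θ₂) / (1 - lam) / (1 - θ₂)
            = (lam - θ₁) * (α * (1 - lam) - t) / (lam * (1 - lam) * (1 - θ₁)) := by
          field_simp; ring
        rw [e]
        exact div_nonneg (by nlinarith) (by positivity)
      · -- both > lam
        have hμl : lam < θ₂ := not_le.mp ha
        have hpos : (0:ℝ) < 1 - lam := by linarith
        have e2 : t * (1 - θ₂) / (1 - lam) / (1 - θ₂) = t / (1 - lam) := by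
          rw [div_div, mul_comm (1 - lam) (1 - θ₂), ← div_div,
            mul_div_assoc, div_self (ne_of_gt hp2), mul_one]
        have e1 : t * (1 - θ₁) / (1 - lam) / (1 - θ₁) = t / (1 - lam) := by
          rw [div_div, mul_comm (1 - lam) (1 - θ₁), ← div_div,
            mul_div_assoc, div_self (ne_of_gt hp1), mul_one]
        rw [e1, e2]
  · -- part (b)
    intro φ hbd hle
    constructor
    · -- forward
      intro hM lam θ hlam hlam1 hθ hθ1
      unfold phiFun
      split_ifs with h
      · have hs : 0 < θ / lam := by positivity
        have hs1 : θ / lam ≤ 1 := (div_le_one hlam).mpr h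
        have hW := hM.2.1 lam (θ / lam) hlam hlam1 hs hs1
        have he : lam * (θ / lam) = θ := by field_simp
        rw [he] at hW
        have e : α + θ / lam * (φ lam - α) = (1 - θ / lam) * α + θ / lam * φ lam := by ring
        linarith [e ▸ hW]
      · have hμl : lam < θ := not_le.mp h
        have hl1 : lam < 1 := lt_of_lt_of_le hμl hθ1
        have hpos : (0:ℝ) < 1 - lam := by linarith
        rcases lt_or_eq_of_le hθ1 with hθ1' | hθ1'
        · have hp : (0:ℝ) < 1 - θ := by linarith
          have hMθ := hM.2.2 lam θ hlam hμl.le hθ1'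
          rw [div_le_div_iff₀ hp hpos] at hMθ
          rw [le_div_iff₀ hpos]
          linarith
        · have h10 : φ 1 ≤ 0 := by have := hle 1 one_pos le_rfl; linarith
          subst hθ1'
          have e : φ lam * (1 - 1) / (1 - lam) = 0 := by ring
          rw [e]; exact h10
    · -- backward
      intro hdom
      refine ⟨hbd, ?_, ?_⟩
      · intro lam θ hlam hlam1 hθ hθ1
        have hlt : 0 < lam * θ := mul_pos hlam hθ
        have hlt1 : lam * θ ≤ 1 := by nlinarith
        have hd := hdom lam (lam * θ) hlam hlam1 hlt hlt1
        unfold phiFun at hd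
        have hc : lam * θ ≤ lam := by nlinarith
        rw [if_pos hc] at hd
        have he : lam * θ / lam = θ := by field_simp
        rw [he] at hd
        have e : α + θ * (φ lam - α) = (1 - θ) * α + θ * φ lam := by ring
        linarith [e ▸ hd]
      · intro θ₁ θ₂ h₁ h12 h2
        rcases eq_or_lt_of_le h12 with rfl | hlt
        · exact le_rfl
        · have hd := hdom θ₁ θ₂ h₁ (by linarith) (by linarith) (by linarith)
          unfold phiFun at hd
          rw [if_neg (not_le.mpr hlt)] at hd
          have hp1 : (0:ℝ) < 1 - θ₁ := by linarith
          have hp2 : (0:ℝ) < 1 - θ₂ := by linarith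
          rw [le_div_iff₀ hp1] at hd
          rw [div_le_div_iff₀ hp2 hp1]
          linarith
end
end

section
/- Let X be a nonempty metric space and let θ ∈ (0,1). Then dim̲_L^θ X = inf_{λ ∈ (0,θ]} dim_L^λ X (as an equality in [0,∞]). -/
open Metric Set Filter
open scoped ENNReal NNReal

noncomputable section

/-- Covering numbers are monotone in the set being covered. -/
theorem coveringNumber_mono_set {X : Type*} [MetricSpace X] (r : ℝ) {E F : Set X}
    (h : E ⊆ F) : coveringNumber r E ≤ coveringNumber r F := by
  apply sInf_le_sInf
  rintro n ⟨s, hs, hcov⟩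
  exact ⟨s, hs, h.trans hcov⟩

/-- Monotonization of the lower spectrum: for any nonempty metric space,
`dim̲_L^θ X = inf_{0 < λ ≤ θ} dim_L^λ X` in `[0,∞]`. -/
theorem mono_lower_spectrum_eq_inf (X : Type*) [MetricSpace X] [Nonempty X]
    (θ : ℝ) (h0 : 0 < θ) (h1 : θ < 1) :
    monoLowerSpectrum X θ = ⨅ lam ∈ Set.Ioc (0 : ℝ) θ, lowerSpectrum X lam := by
  have hθ1 : θ ≤ 1 := h1.le
  refine le_antisymm ?_ ?_
  · -- easy direction: mono ≤ inf over lam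
    refine le_iInf₂ fun lam hlam => ?_
    refine iSup₂_le fun s hs => ?_
    obtain ⟨hs0, C, hC, hb⟩ := hs
    have hmem : s ∈ {s : ℝ | 0 ≤ s ∧ ∃ C : ℝ, 0 < C ∧ ∀ r : ℝ, 0 < r → r < 1 → ∀ x : X,
        ENNReal.ofReal (C * (r ^ (lam - 1)) ^ s) ≤
          (coveringNumber r (Metric.closedBall x (r ^ lam)) : ℝ≥0∞)} := by
      refine ⟨hs0, C, hC, fun r hr0 hr1 x => ?_⟩
      have hrθ : r ≤ r ^ θ := by
        nth_rewrite 1 [← Real.rpow_one r]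
        exact Real.rpow_le_rpow_of_exponent_ge hr0 hr1.le hθ1
      have hθlam : r ^ θ ≤ r ^ lam :=
        Real.rpow_le_rpow_of_exponent_ge hr0 hr1.le hlam.2
      have hlam1 : r ^ lam < 1 := Real.rpow_lt_one hr0.le hr1 hlam.1
      have := hb r (r ^ lam) hr0 hrθ hθlam hlam1 x
      have hdiv : r ^ lam / r = r ^ (lam - 1) := by
        rw [Real.rpow_sub hr0, Real.rpow_one]
      rwa [hdiv] at this
    exact le_iSup₂ (f := fun (s : ℝ) (_ : s ∈ _) => ENNReal.ofReal s) s hmem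
  · -- hard direction: inf ≤ mono
    by_contra hlt
    push_neg at hlt
    obtain ⟨b, hb1, hb2⟩ := exists_between hlt
    obtain ⟨c, hc1, hc2⟩ := exists_between hb2
    have hbne : b ≠ ⊤ := (hc1.trans_le le_top).ne
    have hcne : c ≠ ⊤ := (hc2.trans_le le_top).ne
    set t : ℝ := b.toReal with htdef
    set t'' : ℝ := c.toReal with htdef2
    have ht : 0 ≤ t := ENNReal.toReal_nonneg
    have ht'' : 0 ≤ t'' := ENNReal.toReal_nonneg
    have htt : t < t'' := (ENNReal.toReal_lt_toReal hbne hcne).mpr hc1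
    set ε : ℝ := t'' - t with hεdef
    have hε : 0 < ε := by simp [hεdef]; linarith
    set δ : ℝ := (1 - θ) * ε / (t + 1) with hδdef
    have hδ : 0 < δ := by
      apply div_pos (mul_pos (by linarith) hε) (by linarith)
    have hδmul : δ * (t + 1) = (1 - θ) * ε := by
      rw [hδdef]; field_simp
    set N : ℕ := ⌈θ / δ⌉₊ with hNdef
    have key : ∀ lam, lam ∈ Set.Ioc (0 : ℝ) θ → ∃ s C : ℝ, t'' ≤ s ∧ 0 < C ∧
        ∀ r : ℝ, 0 < r → r < 1 → ∀ x : X,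
          ENNReal.ofReal (C * (r ^ (lam - 1)) ^ s) ≤
            (coveringNumber r (Metric.closedBall x (r ^ lam)) : ℝ≥0∞) := by
      intro lam hlam
      have hcl : ENNReal.ofReal t'' < lowerSpectrum X lam := by
        rw [ENNReal.ofReal_toReal hcne]
        exact hc2.trans_le (iInf₂_le lam hlam)
      rw [lowerSpectrum, lt_iSup_iff] at hcl
      obtain ⟨s, hcl⟩ := hcl
      rw [lt_iSup_iff] at hcl
      obtain ⟨hsmem, hcl⟩ := hcl
      obtain ⟨hs0, C, hC, hb⟩ := hsmem
      have hts : t'' ≤ s := by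
        by_contra hcon
        push_neg at hcon
        exact absurd (ENNReal.ofReal_le_ofReal hcon.le) (not_le.mpr hcl)
      exact ⟨s, C, hts, hC, hb⟩
    choose sfun Cfun hsfun hCfun hbfun using key
    set g : ℕ → ℝ := fun j =>
      if h : (θ - (j : ℝ) * δ) ∈ Set.Ioc (0 : ℝ) θ then Cfun _ h else 1 with hgdef
    have hne : (Finset.range (N + 1)).Nonempty := ⟨0, by simp⟩
    set Cm : ℝ := (Finset.range (N + 1)).inf' hne g with hCmdef
    have hCm : 0 < Cm := by
      rw [hCmdef, Finset.lt_inf'_iff]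
      intro j _
      by_cases h : (θ - (j : ℝ) * δ) ∈ Set.Ioc (0 : ℝ) θ
      · simp only [hgdef, dif_pos h]; exact hCfun _ h
      · simp only [hgdef, dif_neg h]; exact one_pos
    have hmem : t ∈ {s : ℝ | 0 ≤ s ∧ ∃ C : ℝ, 0 < C ∧
        ∀ r R : ℝ, 0 < r → r ≤ r ^ θ → r ^ θ ≤ R → R < 1 → ∀ x : X,
          ENNReal.ofReal (C * (R / r) ^ s) ≤
            (coveringNumber r (Metric.closedBall x R) : ℝ≥0∞)} := by
      refine ⟨ht, Cm, hCm, ?_⟩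
      intro r R hr0 hrθ hθR hR1 x
      have hr1 : r < 1 := by
        by_contra hge
        push_neg at hge
        have h1r : (1 : ℝ) ≤ r ^ θ := Real.one_le_rpow hge h0.le
        linarith
      have hR0 : 0 < R := lt_of_lt_of_le (Real.rpow_pos_of_pos hr0 θ) hθR
      have hlogr : Real.log r < 0 := Real.log_neg hr0 hr1
      have hlogR : Real.log R < 0 := Real.log_neg hR0 hR1
      set μ : ℝ := Real.log R / Real.log r with hμdef
      have hμ0 : 0 < μ := div_pos_of_neg_of_neg hlogR hlogr
      have hRμ : r ^ μ = R := by
        rw [Real.rpow_def_of_pos hr0, hμdef, mul_comm,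
          div_mul_cancel₀ _ (ne_of_lt hlogr), Real.exp_log hR0]
      have hμθ : μ ≤ θ := by
        have h' : r ^ θ ≤ r ^ μ := by rw [hRμ]; exact hθR
        exact (Real.rpow_le_rpow_left_iff_of_base_lt_one hr0 hr1).mp h'
      set j : ℕ := ⌊(θ - μ) / δ⌋₊ with hjdef
      set lam : ℝ := θ - (j : ℝ) * δ with hlamdef
      have hjle : (j : ℝ) * δ ≤ θ - μ := by
        have h' : (j : ℝ) ≤ (θ - μ) / δ := Nat.floor_le (div_nonneg (by linarith) hδ.le)
        rwa [le_div_iff₀ hδ] at h'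
      have hμlam : μ ≤ lam := by rw [hlamdef]; linarith
      have hlamμδ : lam ≤ μ + δ := by
        have h' : (θ - μ) / δ < (j : ℝ) + 1 := Nat.lt_floor_add_one _
        rw [div_lt_iff₀ hδ] at h'
        rw [hlamdef]; nlinarith
      have hjδ : 0 ≤ (j : ℝ) * δ := by positivity
      have hlammem : lam ∈ Set.Ioc (0 : ℝ) θ :=
        ⟨lt_of_lt_of_le hμ0 hμlam, by rw [hlamdef]; linarith⟩
      have hjN : j ∈ Finset.range (N + 1) := by
        rw [Finset.mem_range, Nat.lt_succ_iff, hNdef]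
        calc j ≤ ⌊θ / δ⌋₊ := Nat.floor_mono (by gcongr <;> linarith)
          _ ≤ ⌈θ / δ⌉₊ := Nat.floor_le_ceil _
      have hCmle : Cm ≤ Cfun lam hlammem := by
        have h' := Finset.inf'_le g hjN
        have hg : g j = Cfun lam hlammem := by
          simp only [hgdef]; exact dif_pos hlammem
        rw [hCmdef]
        rw [hg] at h'
        exact h'
      have hmain := hbfun lam hlammem r hr0 hr1 x
      have hball : Metric.closedBall x (r ^ lam) ⊆ Metric.closedBall x R := by
        apply Metric.closedBall_subset_closedBall
        rw [← hRμ]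
        exact Real.rpow_le_rpow_of_exponent_ge hr0 hr1.le hμlam
      refine le_trans ?_ (hmain.trans (by exact_mod_cast coveringNumber_mono_set r hball))
      apply ENNReal.ofReal_le_ofReal
      have hbase1 : (1 : ℝ) ≤ r ^ (lam - 1) :=
        Real.one_le_rpow_of_pos_of_le_one_of_nonpos hr0 hr1.le (by linarith [hlammem.2])
      have e1 : R / r = r ^ (μ - 1) := by
        rw [← hRμ, Real.rpow_sub hr0, Real.rpow_one]
      have hexp : (lam - 1) * t'' ≤ (μ - 1) * t := by
        have h1' : (lam - μ) * t ≤ δ * t := by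
          apply mul_le_mul_of_nonneg_right (by linarith) ht
        have h2' : (1 - θ) * ε ≤ (1 - lam) * ε := by
          apply mul_le_mul_of_nonneg_right (by linarith [hlammem.2]) hε.le
        nlinarith [hδmul, hδ, ht]
      have hchain : (R / r) ^ t ≤ (r ^ (lam - 1)) ^ sfun lam hlammem := by
        calc (R / r) ^ t = r ^ ((μ - 1) * t) := by
              rw [e1, Real.rpow_mul hr0.le]
          _ ≤ r ^ ((lam - 1) * t'') :=
              Real.rpow_le_rpow_of_exponent_ge hr0 hr1.le hexp
          _ = (r ^ (lam - 1)) ^ t'' := by rw [Real.rpow_mul hr0.le]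
          _ ≤ (r ^ (lam - 1)) ^ sfun lam hlammem :=
              Real.rpow_le_rpow_of_exponent_le hbase1 (hsfun lam hlammem)
      have hRr : 0 ≤ (R / r) ^ t := Real.rpow_nonneg (by positivity) t
      exact mul_le_mul hCmle hchain hRr (hCfun lam hlammem).le
    have hle : ENNReal.ofReal t ≤ monoLowerSpectrum X θ :=
      le_iSup₂ (f := fun (s : ℝ) (_ : s ∈ _) => ENNReal.ofReal s) t hmem
    rw [htdef, ENNReal.ofReal_toReal hbne] at hle
    exact absurd hle (not_le.mpr hb1)


end
end
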